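/- arXiv:0804.0321 — 5 statements merged into one kernel-verified Lean document; each statement's English description precedes it below -/
import Mathlib

section
/- For every t > 0 and every bounded continuous g : [0,∞) → ℝ, the difference (1/N) Σ_{i=1}^N g(w_i^{(N)}) ( χ_{Y_i^{(N)}(t) ≤ y_C^{(N)}(t)} − χ_{Y_i^{(N)}(t) ≤ y_C(t)} ) converges to 0 in probability as N → ∞, where y_C(t) = 1 − ∫_{[0,∞)} e^{−wt} λ(dw). -/
/-!
Off a null set every particle jumps only finitely often before `t`, and then the ranks at time
`t` are pinned down combinatorially. If `K = N y_C^{(N)}(t)` particles have jumped, each of them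
sits at rank at most `K`, and for `m ≥ 2` at most `K - m` of them sit at rank `≥ m` (such a rank
counts the particles that jumped after the particle's own last jump); the others occupy the distinct ranks
`K + 1, K + 2, …` in the order of their initial ranks. Hence the indicators of
`Y_i ≤ y_C^{(N)}(t)` and of `Y_i ≤ c` differ for at most `N |y_C^{(N)}(t) - c| + 2` particles.
Finally `y_C^{(N)}(t)` is an average of independent indicators of means `1 - e^{-w_i t}`, so by
Chebyshev it concentrates at its mean, which tends to `c = y_C(t)` by the weak convergence of
`λ^{(N)}`.
-/

open MeasureTheory ProbabilityTheory Filter Topology Real Set NNReal BoundedContinuousFunction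

noncomputable section

/-- The stochastic ranking process of `N` particles on a probability space `Ω`:
jump rates `w i > 0`, initial ranks `x0` (a permutation of `1,…,N`), jump times
`τ i j` with `τ i 0 = 0`, strictly increasing in `j` (a.s.), independent among
particles, with i.i.d. increments that are exponential of rate `w i`; together
with the ranking process `X`, defined by the explicit formulas of the paper. -/
structure RankingSystem (Ω : Type) [MeasureSpace Ω] (N : ℕ) where
  /-- jump rates -/
  w : Fin N → ℝ≥0
  w_pos : ∀ i, 0 < w i
  /-- initial ranks -/
  x0 : Fin N → ℕ
  /-- the initial ranks form a permutation of `1,…,N` -/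
  x0_perm : ∀ k ∈ Finset.Icc 1 N, ∃! i : Fin N, x0 i = k
  /-- jump times; `τ i j` is the `j`-th jump time of particle `i` -/
  τ : Fin N → ℕ → Ω → ℝ
  τ_meas : ∀ i j, Measurable fun ω => τ i j ω
  τ_zero : ∀ i ω, τ i 0 ω = 0
  τ_mono : ∀ᵐ ω ∂(ℙ : Measure Ω), ∀ i, StrictMono fun j => τ i j ω
  /-- independence of the jump-time sequences of different particles -/
  indep : iIndepFun
    (fun i ω => fun j => τ i j ω) (ℙ : Measure Ω)
  /-- independence of the increments of the jump times of each particle -/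
  incr_indep : ∀ i, iIndepFun
    (fun j ω => τ i (j + 1) ω - τ i j ω) (ℙ : Measure Ω)
  /-- each increment is exponentially distributed with rate `w i` -/
  incr_exp : ∀ i j (t : ℝ), 0 ≤ t →
    (ℙ : Measure Ω) {ω | τ i (j + 1) ω - τ i j ω ≤ t}
      = ENNReal.ofReal (1 - Real.exp (-(w i : ℝ) * t))
  /-- the ranking of particle `i` at time `t` -/
  X : Fin N → ℝ → Ω → ℕ
  /-- before the first jump of `i`:
  `X_i(t) = x_{i,0} + #{i' : x_{i',0} > x_{i,0}, τ_{i',1} ≤ t}` -/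
  X_def1 : ∀ ω i (t : ℝ), 0 ≤ t → t < τ i 1 ω →
    X i t ω = x0 i + Set.ncard {i' : Fin N | x0 i < x0 i' ∧ τ i' 1 ω ≤ t}
  /-- at each jump time the particle goes to the top: `X_i(τ_{i,j}) = 1` -/
  X_def2 : ∀ ω i (j : ℕ), 1 ≤ j → X i (τ i j ω) ω = 1
  /-- between consecutive jumps:
  `X_i(t) = #{i' : ∃ j' ≥ 1, τ_{i,j} < τ_{i',j'} ≤ t}` for `τ_{i,j} < t < τ_{i,j+1}` -/
  X_def3 : ∀ ω i (j : ℕ) (t : ℝ), 1 ≤ j → τ i j ω < t → t < τ i (j + 1) ω →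
    X i t ω = Set.ncard
      {i' : Fin N | ∃ j' : ℕ, 1 ≤ j' ∧ τ i j ω < τ i' j' ω ∧ τ i' j' ω ≤ t}

/-- the scaled position `Y_i^{(N)}(t) = (X_i^{(N)}(t) - 1)/N` -/
def RankingSystem.Y {Ω : Type} [MeasureSpace Ω] {N : ℕ} (R : RankingSystem Ω N)
    (i : Fin N) (t : ℝ) (ω : Ω) : ℝ :=
  ((R.X i t ω : ℝ) - 1) / N

/-- the scaled boundary position `y_C^{(N)}(t) = (1/N) Σ_i χ_{τ_{i,1} ≤ t}` -/
def RankingSystem.yCN {Ω : Type} [MeasureSpace Ω] {N : ℕ} (R : RankingSystem Ω N)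
    (t : ℝ) (ω : Ω) : ℝ :=
  (N : ℝ)⁻¹ * ∑ i : Fin N, if R.τ i 1 ω ≤ t then (1 : ℝ) else 0

/-- the scaled initial position `y_{i,0}^{(N)} = (x_{i,0}^{(N)} - 1)/N` -/
def RankingSystem.y0 {Ω : Type} [MeasureSpace Ω] {N : ℕ} (R : RankingSystem Ω N)
    (i : Fin N) : ℝ :=
  ((R.x0 i : ℝ) - 1) / N

open scoped Finset

theorem exists_le_lt_succ {α : Type*} [LinearOrder α] {f : ℕ → α} {t : α} (h0 : f 0 ≤ t)
    (h : ∃ j, t < f j) : ∃ n, f n ≤ t ∧ t < f (n + 1) := by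
  classical
  obtain ⟨n, hn⟩ : ∃ n, Nat.find h = n + 1 :=
    Nat.exists_eq_succ_of_ne_zero fun h' => (Nat.find_spec h).not_ge (h' ▸ h0)
  exact ⟨n, not_lt.1 (Nat.find_min h (by omega)), hn ▸ Nat.find_spec h⟩

namespace Finset

variable {ι β : Type*} [LinearOrder β]

theorem card_filter_le_card_filter_lt_add_le [DecidableEq ι] (s : Finset ι) (L : ι → β) {m : ℕ}
    (h : ∃ i ∈ s, m ≤ #{i' ∈ s | L i < L i'}) :
    #{i ∈ s | m ≤ #{i' ∈ s | L i < L i'}} + m ≤ #s := by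
  set S := {i ∈ s | m ≤ #{i' ∈ s | L i < L i'}}
  obtain ⟨i, hiS, hmax⟩ : ∃ i ∈ S, ∀ i' ∈ S, L i' ≤ L i :=
    S.exists_max_image L (by obtain ⟨i, hi, him⟩ := h; exact ⟨i, mem_filter.2 ⟨hi, him⟩⟩)
  have hdisj : Disjoint S {i' ∈ s | L i < L i'} :=
    disjoint_left.2 fun i' hi'S hi' => (hmax i' hi'S).not_gt (mem_filter.1 hi').2
  calc #S + m ≤ #S + #{i' ∈ s | L i < L i'} := by gcongr; exact (mem_filter.1 hiS).2
    _ = #(S ∪ {i' ∈ s | L i < L i'}) := (card_union_of_disjoint hdisj).symm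
    _ ≤ #s := card_le_card (union_subset (filter_subset _ _) (filter_subset _ _))

theorem injOn_card_filter_lt (s : Finset ι) {f : ι → β} (hf : Set.InjOn f s) :
    Set.InjOn (fun i => #{i' ∈ s | f i' < f i}) s := by
  have hlt : ∀ a ∈ s, ∀ b, f a < f b → #{i' ∈ s | f i' < f a} < #{i' ∈ s | f i' < f b} :=
    fun a ha b hab => card_lt_card <| (ssubset_iff_of_subset
      fun x hx => mem_filter.2 ⟨(mem_filter.1 hx).1, (mem_filter.1 hx).2.trans hab⟩).2
      ⟨a, mem_filter.2 ⟨ha, hab⟩, fun h => (mem_filter.1 h).2.false⟩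
  intro a ha b hb hab
  by_contra hne
  rcases (hf.ne ha hb hne).lt_or_gt with h | h
  · exact (hlt a ha b h).ne hab
  · exact (hlt b hb a h).ne' hab

end Finset

section Counting

open Finset

/-- In the application `J` is the set of jumped particles and `ρ i` is the number of non-jumped
particles ahead of `i`. -/
theorem card_threshold_disagreement_le {ι : Type*} [Fintype ι] [DecidableEq ι]
    (X ρ : ι → ℕ) (J : Finset ι)
    (hJ : ∀ m, 2 ≤ m → (∃ i ∈ J, m ≤ X i) → #{i ∈ J | m ≤ X i} + m ≤ #J)
    (hJc : ∀ i ∉ J, X i = #J + 1 + ρ i) (hρ : Set.InjOn ρ ↑Jᶜ) (b : ℕ) :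
    #{i | ¬(X i ≤ #J + 1 ↔ X i ≤ b + 1)} ≤ (#J - b) + (b - #J) + 1 := by
  set K := #J
  have hXJ : ∀ i ∈ J, X i ≤ K := by
    intro i hi
    by_cases h : 2 ≤ X i
    · have := hJ (X i) h ⟨i, hi, le_rfl⟩
      omega
    · have := card_pos.2 ⟨i, hi⟩
      omega
  rw [← card_filter_add_card_filter_not (· ∈ J), filter_filter, filter_filter, add_assoc]
  gcongr
  · have hsub : ({i | ¬(X i ≤ K + 1 ↔ X i ≤ b + 1) ∧ i ∈ J} : Finset ι) ⊆
        {i ∈ J | b + 2 ≤ X i} := fun i hi => by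
      simp only [mem_filter, Finset.mem_univ, true_and] at hi ⊢
      have := hXJ i hi.2
      exact ⟨hi.2, by omega⟩
    by_cases hne : ∃ i ∈ J, b + 2 ≤ X i
    · have := hJ (b + 2) (by omega) hne
      have := Finset.card_le_card hsub
      omega
    · rw [Finset.eq_empty_of_forall_notMem fun i hi => hne ⟨i, mem_filter.1 (hsub hi)⟩]
      exact Nat.zero_le _
  · calc _ ≤ #(range (b - K + 1)) := by
          refine card_le_card_of_injOn ρ (fun i hi => ?_) (hρ.mono fun i hi => ?_)
          · simp only [coe_filter, Finset.mem_univ, true_and, Set.mem_ofPred_eq] at hi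
            have := hJc i hi.2
            simp only [coe_range, Set.mem_Iio]
            omega
          · simp only [coe_filter, Finset.mem_univ, true_and, Set.mem_ofPred_eq] at hi
            simpa using hi.2
      _ = b - K + 1 := card_range _

theorem abs_sum_mul_ite_sub_ite_le {ι : Type*} (s : Finset ι) (a : ι → ℝ) {M : ℝ}
    (ha : ∀ i ∈ s, |a i| ≤ M) (P Q : ι → Prop) [DecidablePred P] [DecidablePred Q] :
    |∑ i ∈ s, a i * ((if P i then (1 : ℝ) else 0) - (if Q i then (1 : ℝ) else 0))|
      ≤ M * #{i ∈ s | ¬(P i ↔ Q i)} := by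
  calc _ ≤ ∑ i ∈ s, |a i * ((if P i then (1 : ℝ) else 0) - (if Q i then (1 : ℝ) else 0))| :=
        abs_sum_le_sum_abs _ _
    _ ≤ ∑ i ∈ s, if ¬(P i ↔ Q i) then M else 0 := by
        refine sum_le_sum fun i hi => ?_
        by_cases hP : P i <;> by_cases hQ : Q i <;> simp [hP, hQ, ha i hi]
    _ = M * #{i ∈ s | ¬(P i ↔ Q i)} := by
        rw [sum_ite, sum_const_zero, add_zero, sum_const, nsmul_eq_mul, mul_comm]

end Counting

theorem MeasureTheory.tendstoInMeasure_zero_of_norm_le {α ι E F : Type*} [MeasurableSpace α]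
    {μ : Measure α} [SeminormedAddCommGroup E] [SeminormedAddCommGroup F] {l : Filter ι}
    {f : ι → α → E} {u : ι → α → F} {v : ι → ℝ} {C : ℝ}
    (hu : TendstoInMeasure μ u l 0) (hv : Tendsto v l (𝓝 0))
    (hfu : ∀ᶠ i in l, ∀ᵐ x ∂μ, ‖f i x‖ ≤ C * ‖u i x‖ + v i) :
    TendstoInMeasure μ f l 0 := by
  rw [tendstoInMeasure_iff_norm] at hu ⊢
  intro ε hε
  have hC : 0 < max C 1 := lt_max_of_lt_right one_pos
  refine tendsto_of_tendsto_of_tendsto_of_le_of_le' tendsto_const_nhds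
    (hu (ε / (2 * max C 1)) (by positivity)) (Eventually.of_forall fun _ => zero_le) ?_
  filter_upwards [hfu, hv.eventually (gt_mem_nhds (half_pos hε))] with i hi hvi
  refine measure_mono_ae (hi.mono fun x hx hεx => ?_)
  change ε ≤ ‖f i x - 0‖ at hεx
  change ε / (2 * max C 1) ≤ ‖u i x - 0‖
  rw [sub_zero] at hεx ⊢
  rw [div_le_iff₀ (by positivity)]
  nlinarith [le_max_left C 1, norm_nonneg (u i x)]

theorem variance_sum_le_card_div_four {Ω ι : Type*} [MeasurableSpace Ω] {μ : Measure Ω}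
    [IsProbabilityMeasure μ] {X : ι → Ω → ℝ} (hX : ∀ i, Measurable (X i))
    (hind : iIndepFun X μ) (hbd : ∀ i ω, X i ω ∈ Set.Icc 0 1) (s : Finset ι) :
    Var[∑ i ∈ s, X i; μ] ≤ #s / 4 := by
  rw [IndepFun.variance_sum (fun i _ => memLp_of_bounded (ae_of_all _ (hbd i))
    (hX i).aestronglyMeasurable 2) fun i _ j _ hij => hind.indepFun hij]
  calc _ ≤ ∑ _i ∈ s, (1 / 4 : ℝ) := Finset.sum_le_sum fun i _ =>
        (variance_le_sq_of_bounded (ae_of_all _ (hbd i)) (hX i).aemeasurable).trans_eq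
          (by norm_num)
    _ = #s / 4 := by rw [Finset.sum_const, nsmul_eq_mul, mul_one_div]

theorem natCast_sub_one_le_iff_le_floor_add_one {x : ℕ} {a : ℝ} (ha : 0 ≤ a) :
    (x : ℝ) - 1 ≤ a ↔ x ≤ ⌊a⌋₊ + 1 := by
  rcases x with _ | x
  · simp only [CharP.cast_eq_zero, zero_sub, zero_le, iff_true]
    linarith
  · push_cast
    rw [add_sub_cancel_right, Nat.le_floor_iff ha]

namespace RankingSystem

variable {Ω : Type} [MeasureSpace Ω] {N : ℕ} (R : RankingSystem Ω N)

theorem image_x0 : Finset.univ.image R.x0 = Finset.Icc 1 N := by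
  have hsup : Finset.Icc 1 N ⊆ Finset.univ.image R.x0 := fun k hk => by
    obtain ⟨i, hi, -⟩ := R.x0_perm k hk
    exact Finset.mem_image.2 ⟨i, Finset.mem_univ i, hi⟩
  refine Finset.eq_of_superset_of_card_ge hsup ?_
  simpa using Finset.card_image_le (s := Finset.univ) (f := R.x0)

theorem x0_mem_Icc (i : Fin N) : R.x0 i ∈ Finset.Icc 1 N :=
  R.image_x0 ▸ Finset.mem_image_of_mem R.x0 (Finset.mem_univ i)

theorem x0_injective : Function.Injective R.x0 := fun i₁ i₂ h => by
  obtain ⟨i, -, huniq⟩ := R.x0_perm (R.x0 i₁) (R.x0_mem_Icc i₁)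
  rw [huniq i₁ rfl, huniq i₂ h.symm]

theorem card_filter_x0_lt (i : Fin N) : #{i' | R.x0 i' < R.x0 i} = R.x0 i - 1 := by
  have himage : ({i' | R.x0 i' < R.x0 i} : Finset (Fin N)).image R.x0 = Finset.Ico 1 (R.x0 i) := by
    ext k
    simp only [Finset.mem_image, Finset.mem_filter, Finset.mem_univ, true_and, Finset.mem_Ico]
    constructor
    · rintro ⟨i', hlt, rfl⟩
      exact ⟨(Finset.mem_Icc.1 (R.x0_mem_Icc i')).1, hlt⟩
    · rintro ⟨h1, hlt⟩
      obtain ⟨i', hi', -⟩ :=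
        R.x0_perm k (Finset.mem_Icc.2 ⟨h1, hlt.le.trans (Finset.mem_Icc.1 (R.x0_mem_Icc i)).2⟩)
      exact ⟨i', hi' ▸ hlt, hi'⟩
  rw [← Finset.card_image_of_injective _ R.x0_injective, himage, Nat.card_Ico]

def jumped (t : ℝ) (ω : Ω) : Finset (Fin N) := {i | R.τ i 1 ω ≤ t}

theorem yCN_eq_card_jumped_div (t : ℝ) (ω : Ω) : R.yCN t ω = #(R.jumped t ω) / N := by
  rw [yCN, Finset.sum_boole, div_eq_inv_mul]
  rfl

theorem X_eq_of_notMem_jumped {t : ℝ} (ht : 0 ≤ t) {ω : Ω} {i : Fin N}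
    (hi : i ∉ R.jumped t ω) :
    R.X i t ω = #(R.jumped t ω) + 1 + #{i' ∈ (R.jumped t ω)ᶜ | R.x0 i' < R.x0 i} := by
  set J := R.jumped t ω
  have hX := R.X_def1 ω i t ht (not_le.1 fun h => hi (by simpa [J, jumped] using h))
  have hA : {i' : Fin N | R.x0 i < R.x0 i' ∧ R.τ i' 1 ω ≤ t} = ↑{i' ∈ J | R.x0 i < R.x0 i'} := by
    ext i'
    simp [J, jumped, and_comm]
  -- the `x0 i - 1` particles that start ahead of `i`, together with the jumped particles that
  -- start behind it, are all of `J` and the non-jumped particles ahead of `i`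
  have hJ : #J = #{i' ∈ J | R.x0 i < R.x0 i'} + #{i' ∈ J | R.x0 i' < R.x0 i} := by
    rw [← Finset.card_filter_add_card_filter_not (fun i' => R.x0 i < R.x0 i')]
    congr 2
    refine Finset.filter_congr fun i' hi' => ?_
    have : R.x0 i' ≠ R.x0 i := R.x0_injective.ne (ne_of_mem_of_not_mem hi' hi)
    omega
  have hlt : #{i' | R.x0 i' < R.x0 i} = #{i' ∈ J | R.x0 i' < R.x0 i} +
      #{i' ∈ Jᶜ | R.x0 i' < R.x0 i} := by
    rw [← Finset.card_filter_add_card_filter_not (· ∈ J), Finset.filter_filter,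
      Finset.filter_filter]
    congr 1 <;> congr 1 <;> ext <;> simp [and_comm]
  have := R.card_filter_x0_lt i
  have := (Finset.mem_Icc.1 (R.x0_mem_Icc i)).1
  rw [hX, hA, Set.ncard_coe_finset]
  omega

theorem card_filter_jumped_le_X_add_le {t : ℝ} (ht : 0 ≤ t) {ω : Ω}
    (hmono : ∀ i, Monotone fun j => R.τ i j ω) (hfin : ∀ i, ∃ j, t < R.τ i j ω) {m : ℕ}
    (hm : 2 ≤ m) (hne : ∃ i ∈ R.jumped t ω, m ≤ R.X i t ω) :
    #{i ∈ R.jumped t ω | m ≤ R.X i t ω} + m ≤ #(R.jumped t ω) := by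
  -- `n i` indexes the last jump of `i` by time `t`, and `L i` is its time
  choose n hn using fun i => exists_le_lt_succ ((R.τ_zero i ω).trans_le ht) (hfin i)
  have hle : ∀ i j, R.τ i j ω ≤ t ↔ j ≤ n i := fun i j =>
    ⟨fun h => not_lt.1 fun hj => (hn i).2.not_ge ((hmono i hj).trans h),
      fun h => (hmono i h).trans (hn i).1⟩
  set J := R.jumped t ω
  have hmemJ : ∀ i, i ∈ J ↔ 1 ≤ n i := fun i => by simp [J, jumped, hle]
  set L := fun i => R.τ i (n i) ω
  have hX : ∀ i ∈ J, m ≤ R.X i t ω ↔ m ≤ #{i' ∈ J | L i < L i'} := by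
    intro i hi
    rcases (hn i).1.lt_or_eq with hlt | heq
    · rw [R.X_def3 ω i (n i) t ((hmemJ i).1 hi) hlt (hn i).2, ← Set.ncard_coe_finset]
      congr! 3
      ext i'
      simp only [Set.mem_ofPred_eq, Finset.coe_filter]
      constructor
      · rintro ⟨j', hj', hlt', hle'⟩
        exact ⟨(hmemJ i').2 (hj'.trans ((hle i' j').1 hle')),
          hlt'.trans_le (hmono i' ((hle i' j').1 hle'))⟩
      · rintro ⟨hi', hlt'⟩
        exact ⟨n i', (hmemJ i').1 hi', hlt', (hn i').1⟩
    · have hX1 : R.X i t ω = 1 := heq ▸ R.X_def2 ω i (n i) ((hmemJ i).1 hi)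
      have hL : #{i' ∈ J | L i < L i'} = 0 := Finset.card_eq_zero.2 <|
        Finset.filter_eq_empty_iff.2 fun i' _ => not_lt.2 ((hn i').1.trans heq.ge)
      omega
  rw [Finset.filter_congr hX]
  obtain ⟨i, hi, him⟩ := hne
  exact Finset.card_filter_le_card_filter_lt_add_le J L ⟨i, hi, (hX i hi).1 him⟩

def discrepancy (g : ℝ≥0 →ᵇ ℝ) (t c : ℝ) (ω : Ω) : ℝ :=
  (N : ℝ)⁻¹ * ∑ i : Fin N, g (R.w i) *
    ((if R.Y i t ω ≤ R.yCN t ω then (1 : ℝ) else 0) - (if R.Y i t ω ≤ c then (1 : ℝ) else 0))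

theorem abs_discrepancy_le {t c : ℝ} (ht : 0 ≤ t) (hc : 0 ≤ c) (g : ℝ≥0 →ᵇ ℝ) {ω : Ω}
    (hmono : ∀ i, Monotone fun j => R.τ i j ω) (hfin : ∀ i, ∃ j, t < R.τ i j ω) :
    |R.discrepancy g t c ω| ≤ ‖g‖ * (|R.yCN t ω - c| + 2 / N) := by
  rcases N.eq_zero_or_pos with rfl | hN
  · simp only [discrepancy, Finset.univ_eq_empty, Finset.sum_empty, mul_zero, abs_zero]
    positivity
  have hN : (0 : ℝ) < N := by exact_mod_cast hN
  set J := R.jumped t ω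
  set b := ⌊c * N⌋₊
  have hYJ : ∀ i, R.Y i t ω ≤ R.yCN t ω ↔ R.X i t ω ≤ #J + 1 := fun i => by
    rw [Y, yCN_eq_card_jumped_div, div_le_div_iff_of_pos_right hN, sub_le_iff_le_add]
    exact_mod_cast Iff.rfl
  have hYc : ∀ i, R.Y i t ω ≤ c ↔ R.X i t ω ≤ b + 1 := fun i => by
    rw [Y, div_le_iff₀ hN]
    exact natCast_sub_one_le_iff_le_floor_add_one (by positivity)
  have hcount := card_threshold_disagreement_le (fun i => R.X i t ω)
    (fun i => #{i' ∈ Jᶜ | R.x0 i' < R.x0 i}) J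
    (fun m hm hne => R.card_filter_jumped_le_X_add_le ht hmono hfin hm hne)
    (fun i hi => R.X_eq_of_notMem_jumped ht hi)
    (Finset.injOn_card_filter_lt _ R.x0_injective.injOn) b
  have hdist : (((#J - b) + (b - #J) + 1 : ℕ) : ℝ) ≤ |(#J : ℝ) - c * N| + 2 := by
    have := Nat.floor_le (mul_nonneg hc hN.le) (a := c * N)
    have := Nat.lt_floor_add_one (c * N)
    rcases le_total b #J with h | h
    · rw [Nat.sub_eq_zero_of_le h]
      push_cast [h]
      linarith [le_abs_self ((#J : ℝ) - c * N)]
    · rw [Nat.sub_eq_zero_of_le h]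
      push_cast [h]
      linarith [neg_abs_le ((#J : ℝ) - c * N)]
  have hB := abs_sum_mul_ite_sub_ite_le Finset.univ (fun i => g (R.w i))
    (fun i _ => (Real.norm_eq_abs _).symm.trans_le (g.norm_coe_le_norm _))
    (fun i => R.Y i t ω ≤ R.yCN t ω) (fun i => R.Y i t ω ≤ c)
  rw [Finset.filter_congr fun i _ => by rw [hYJ, hYc]] at hB
  calc _ = (N : ℝ)⁻¹ * |∑ i : Fin N, g (R.w i) *
        ((if R.Y i t ω ≤ R.yCN t ω then (1 : ℝ) else 0)
          - (if R.Y i t ω ≤ c then (1 : ℝ) else 0))| := by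
        rw [discrepancy, abs_mul, abs_of_pos (inv_pos.2 hN)]
    _ ≤ (N : ℝ)⁻¹ * (‖g‖ * (|(#J : ℝ) - c * N| + 2)) := by
        gcongr
        exact hB.trans (by gcongr; exact (Nat.cast_le.2 hcount).trans hdist)
    _ = ‖g‖ * (|R.yCN t ω - c| + 2 / N) := by
        rw [yCN_eq_card_jumped_div, div_sub' hN.ne', abs_div, abs_of_pos hN]
        field_simp
        rfl

theorem measure_forall_lt_incr_le (i : Fin N) {t : ℝ} (ht : 0 ≤ t) (n : ℕ) :
    (ℙ : Measure Ω) {ω | ∀ k < n, R.τ i (k + 1) ω - R.τ i k ω ≤ t}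
      = ENNReal.ofReal (1 - rexp (-(R.w i : ℝ) * t)) ^ n := by
  have hset : {ω | ∀ k < n, R.τ i (k + 1) ω - R.τ i k ω ≤ t}
      = ⋂ k ∈ Finset.range n, {ω | R.τ i (k + 1) ω - R.τ i k ω ≤ t} := by
    ext ω
    simp
  rw [hset, (R.incr_indep i).meas_biInter (m := fun _ => inferInstance)
      (s := fun k => {ω | R.τ i (k + 1) ω - R.τ i k ω ≤ t})
      fun k _ => ⟨Set.Iic t, measurableSet_Iic, rfl⟩,
    Finset.prod_congr rfl fun k _ => R.incr_exp i k t ht, Finset.prod_const, Finset.card_range]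

theorem ae_exists_lt_incr (i : Fin N) {t : ℝ} (ht : 0 ≤ t) :
    ∀ᵐ ω ∂(ℙ : Measure Ω), ∃ k, t < R.τ i (k + 1) ω - R.τ i k ω := by
  have hq : ENNReal.ofReal (1 - rexp (-(R.w i : ℝ) * t)) < 1 :=
    ENNReal.ofReal_lt_one.2 (sub_lt_self 1 (exp_pos _))
  refine ae_iff.2 (le_antisymm (ge_of_tendsto' (ENNReal.tendsto_pow_atTop_nhds_zero_of_lt_one hq)
    fun n => ?_) zero_le)
  rw [← R.measure_forall_lt_incr_le i ht n]
  exact measure_mono fun ω hω k _ => not_lt.1 fun hk => hω ⟨k, hk⟩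

theorem ae_monotone_and_exists_lt {t : ℝ} (ht : 0 ≤ t) :
    ∀ᵐ ω ∂(ℙ : Measure Ω), ∀ i, (Monotone fun j => R.τ i j ω) ∧ ∃ j, t < R.τ i j ω := by
  filter_upwards [R.τ_mono, ae_all_iff.2 fun i => R.ae_exists_lt_incr i ht] with ω hmono hincr i
  obtain ⟨k, hk⟩ := hincr i
  have := (hmono i).monotone (Nat.zero_le k)
  simp only [R.τ_zero] at this
  exact ⟨(hmono i).monotone, k + 1, by linarith⟩

theorem measurableSet_τ_one_le (i : Fin N) (t : ℝ) : MeasurableSet {ω | R.τ i 1 ω ≤ t} :=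
  measurableSet_le (R.τ_meas i 1) measurable_const

theorem yCN_eq_smul_sum_indicator (t : ℝ) :
    R.yCN t = (N : ℝ)⁻¹ • ∑ i, {ω | R.τ i 1 ω ≤ t}.indicator 1 := by
  ext ω
  simp [yCN, Set.indicator_apply]

variable [IsProbabilityMeasure (ℙ : Measure Ω)]

theorem integral_yCN {t : ℝ} (ht : 0 ≤ t) :
    (ℙ : Measure Ω)[R.yCN t] = (N : ℝ)⁻¹ * ∑ i, (1 - rexp (-(R.w i : ℝ) * t)) := by
  have hprob : ∀ i, (ℙ : Measure Ω) {ω | R.τ i 1 ω ≤ t}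
      = ENNReal.ofReal (1 - rexp (-(R.w i : ℝ) * t)) := fun i => by
    simpa [R.τ_zero] using R.incr_exp i 0 t ht
  have hexp : ∀ i, rexp (-(R.w i : ℝ) * t) ≤ 1 := fun i =>
    exp_le_one_iff.2 (mul_nonpos_of_nonpos_of_nonneg (neg_nonpos.2 (R.w i).coe_nonneg) ht)
  simp only [yCN_eq_smul_sum_indicator, Pi.smul_apply, Finset.sum_apply, smul_eq_mul]
  rw [integral_const_mul, integral_finsetSum (f := fun i => {ω | R.τ i 1 ω ≤ t}.indicator 1) _
    fun i _ => (integrable_const (1 : ℝ)).indicator (R.measurableSet_τ_one_le i t)]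
  congr 1
  refine Finset.sum_congr rfl fun i _ => ?_
  rw [integral_indicator_one (R.measurableSet_τ_one_le i t), measureReal_def, hprob,
    ENNReal.toReal_ofReal]
  linarith [hexp i]

theorem memLp_yCN (t : ℝ) : MemLp (R.yCN t) 2 (ℙ : Measure Ω) := by
  rw [yCN_eq_smul_sum_indicator]
  exact (memLp_finsetSum' _ fun i _ =>
    (memLp_const (1 : ℝ)).indicator (R.measurableSet_τ_one_le i t)).const_smul _

theorem variance_yCN_le (t : ℝ) : Var[R.yCN t] ≤ (4 * (N : ℝ))⁻¹ := by
  have hvar := variance_sum_le_card_div_four (μ := (ℙ : Measure Ω))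
    (X := fun i => {ω | R.τ i 1 ω ≤ t}.indicator 1)
    (fun i => measurable_const.indicator (R.measurableSet_τ_one_le i t))
    (R.indep.comp (fun _ s => {s' : ℕ → ℝ | s' 1 ≤ t}.indicator 1 s) fun _ =>
      measurable_const.indicator (measurableSet_le (measurable_pi_apply 1) measurable_const))
    (fun i ω => by by_cases h : R.τ i 1 ω ≤ t <;> simp [h]) Finset.univ
  rw [yCN_eq_smul_sum_indicator, variance_smul]
  calc ((N : ℝ)⁻¹) ^ 2 * Var[∑ i, {ω | R.τ i 1 ω ≤ t}.indicator 1]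
      ≤ ((N : ℝ)⁻¹) ^ 2 * (N / 4) := by
        gcongr
        simpa using hvar
    _ = (4 * (N : ℝ))⁻¹ := by
        rcases N.eq_zero_or_pos with rfl | hN
        · simp
        · field_simp

theorem tendstoInMeasure_yCN_sub_integral (R : (N : ℕ) → RankingSystem Ω N) (t : ℝ) :
    TendstoInMeasure (ℙ : Measure Ω)
      (fun N ω => (R N).yCN t ω - (ℙ : Measure Ω)[(R N).yCN t]) atTop 0 := by
  rw [tendstoInMeasure_iff_norm]
  intro ε hε
  have hlim : Tendsto (fun N : ℕ => ENNReal.ofReal ((4 * (N : ℝ))⁻¹ / ε ^ 2)) atTop (𝓝 0) := by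
    simpa using ENNReal.tendsto_ofReal ((tendsto_natCast_atTop_atTop.const_mul_atTop
      (by norm_num : (0 : ℝ) < 4)).inv_tendsto_atTop.div_const (ε ^ 2))
  refine tendsto_of_tendsto_of_tendsto_of_le_of_le tendsto_const_nhds hlim (fun _ => zero_le)
    fun N => ?_
  simp only [Pi.zero_apply, sub_zero, Real.norm_eq_abs]
  exact (meas_ge_le_variance_div_sq ((R N).memLp_yCN t) hε).trans
    (ENNReal.ofReal_le_ofReal (by gcongr; exact (R N).variance_yCN_le t))

theorem tendsto_integral_yCN (R : (N : ℕ) → RankingSystem Ω N) (lam : Measure ℝ≥0)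
    [IsProbabilityMeasure lam]
    (hweak : ∀ g : ℝ≥0 →ᵇ ℝ,
      Tendsto (fun N : ℕ => (N : ℝ)⁻¹ * ∑ i : Fin N, g ((R N).w i)) atTop
        (𝓝 (∫ x, g x ∂lam)))
    {t : ℝ} (ht : 0 ≤ t) :
    Tendsto (fun N => (ℙ : Measure Ω)[(R N).yCN t]) atTop
      (𝓝 (1 - ∫ x, rexp (-(x : ℝ) * t) ∂lam)) := by
  let e : ℝ≥0 →ᵇ ℝ := .ofNormedAddCommGroup (fun x => rexp (-(x : ℝ) * t)) (by fun_prop) 1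
    fun x => by
      rw [norm_of_nonneg (exp_pos _).le, exp_le_one_iff]
      exact mul_nonpos_of_nonpos_of_nonneg (neg_nonpos.2 x.coe_nonneg) ht
  have h := hweak (1 - e)
  simp only [BoundedContinuousFunction.coe_sub, BoundedContinuousFunction.coe_one, Pi.sub_apply,
    Pi.one_apply] at h
  rw [integral_sub (integrable_const 1) (e.integrable lam)] at h
  simpa [integral_yCN _ ht, e] using h

theorem tendstoInMeasure_yCN_sub_of_tendsto_integral (R : (N : ℕ) → RankingSystem Ω N)
    {t c : ℝ} (hmean : Tendsto (fun N => (ℙ : Measure Ω)[(R N).yCN t]) atTop (𝓝 c)) :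
    TendstoInMeasure (ℙ : Measure Ω) (fun N ω => (R N).yCN t ω - c) atTop 0 :=
  tendstoInMeasure_zero_of_norm_le (C := 1) (tendstoInMeasure_yCN_sub_integral R t)
    (by simpa only [sub_self, abs_zero] using (hmean.sub_const c).abs)
    (Eventually.of_forall fun N => ae_of_all _ fun ω => by
      simpa [Real.norm_eq_abs] using abs_sub_le _ ((ℙ : Measure Ω)[(R N).yCN t]) c)

end RankingSystem

/-- `(1/N) Σ g(w_i)(χ_{Y_i(t) ≤ y_C^{(N)}(t)} - χ_{Y_i(t) ≤ y_C(t)})` converges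
to `0` in probability, where `y_C(t) = 1 - ∫ e^{-wt} λ(dw)`. -/
theorem stmt8
    (Ω : Type) [MeasureSpace Ω] [IsProbabilityMeasure (ℙ : Measure Ω)]
    (R : (N : ℕ) → RankingSystem Ω N)
    (lam : Measure ℝ≥0) [IsProbabilityMeasure lam]
    (hweak : ∀ g : ℝ≥0 →ᵇ ℝ,
      Tendsto (fun N : ℕ => (N : ℝ)⁻¹ * ∑ i : Fin N, g ((R N).w i)) atTop
        (𝓝 (∫ x, g x ∂lam)))
    (t : ℝ) (ht : 0 < t) (g : ℝ≥0 →ᵇ ℝ) :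
    ∀ ε > (0 : ℝ), Tendsto
      (fun N : ℕ => (ℙ : Measure Ω)
        {ω | ε ≤ |(N : ℝ)⁻¹ * ∑ i : Fin N, g ((R N).w i) *
              ((if (R N).Y i t ω ≤ (R N).yCN t ω then (1 : ℝ) else 0)
                - (if (R N).Y i t ω ≤ 1 - ∫ x, rexp (-(x : ℝ) * t) ∂lam
                    then (1 : ℝ) else 0))|})
      atTop (𝓝 0) := by
  have hmean := RankingSystem.tendsto_integral_yCN R lam hweak ht.le
  set c := 1 - ∫ x, rexp (-(x : ℝ) * t) ∂lam
  have hc : 0 ≤ c := ge_of_tendsto' hmean fun N => integral_nonneg fun ω => by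
    rw [RankingSystem.yCN_eq_card_jumped_div]
    positivity
  have hyCN := RankingSystem.tendstoInMeasure_yCN_sub_of_tendsto_integral R hmean
  have h2N : Tendsto (fun N : ℕ => ‖g‖ * (2 / N)) atTop (𝓝 0) := by
    simpa using (tendsto_const_div_atTop_nhds_zero_nat 2).const_mul ‖g‖
  have key := tendstoInMeasure_zero_of_norm_le (f := fun N => (R N).discrepancy g t c)
    (C := ‖g‖) hyCN h2N <| Eventually.of_forall fun N =>
      ((R N).ae_monotone_and_exists_lt ht.le).mono fun ω hω => by
        simpa only [mul_add, Real.norm_eq_abs] using (R N).abs_discrepancy_le ht.le hc g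
          (fun i => (hω i).1) (fun i => (hω i).2)
  intro ε hε
  simpa [RankingSystem.discrepancy] using tendstoInMeasure_iff_norm.1 key ε hε
end
end

section
/- Define, for y ∈ [0,1) and t ≥ 0, the random variable y_C^{(N)}(y,t) = y + (1/N) Σ_{i=1}^N χ_{τ_i^{(N)} ≤ t} χ_{y_{i,0}^{(N)} ≥ y} and the deterministic function y_C(y,t) = 1 − ∫_y^1 ∫_{[0,∞)} e^{−wt} μ_{z,0}(dw) dz. Then for every y ∈ [0,1) and t ≥ 0, y_C^{(N)}(y,t) converges to y_C(y,t) in probability as N → ∞. -/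
open MeasureTheory ProbabilityTheory Filter Topology Real Set NNReal BoundedContinuousFunction

noncomputable section

/-!
Write `y_C^{(N)}(y,t) = y + S_N` with `S_N = N⁻¹ ∑ᵢ χ_{τᵢ ≤ t} χ_{yᵢ ≥ y}`. The summands are
independent and take values in `[0,1]`, so `Var S_N ≤ 1/(4N)` and Chebyshev's inequality gives
`S_N - 𝔼 S_N → 0` in probability. The mean `𝔼 S_N = N⁻¹ ∑ᵢ (1 - e^{-wᵢt}) χ_{yᵢ ≥ y}` is
deterministic. For a bounded continuous `g`, the tail average `N⁻¹ ∑ᵢ g(wᵢ) χ_{yᵢ ≥ y}` is the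
difference of the weighted distribution functions at `1 - 1/N` (above every position) and at `y`,
up to the at most one position equal to `y`; the uniform convergence of those distribution
functions to `∫₀^y ∫ g dμ_z dz` then gives the limit `∫_y^1 ∫ g dμ_z dz`. Taking `g = 1` and
`g = e^{-·t}` yields `𝔼 S_N → 1 - y - ∫_y^1 ∫ e^{-wt} dμ_z dz`.
-/

theorem injective_and_mem_of_existsUnique {α β : Type*} [Fintype α] {f : α → β} {s : Finset β}
    (hs : s.card = Fintype.card α) (h : ∀ b ∈ s, ∃! a, f a = b) :
    Function.Injective f ∧ ∀ a, f a ∈ s := by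
  choose g hg using fun b hb => (h b hb).exists
  have hsurj := Finset.surj_on_of_inj_on_of_card_le g (fun _ _ => Finset.mem_univ _)
    (fun b₁ b₂ hb₁ hb₂ he => by rw [← hg b₁ hb₁, ← hg b₂ hb₂, he]) (by simp [hs])
  have hmem : ∀ a, f a ∈ s := fun a => by
    obtain ⟨b, hb, rfl⟩ := hsurj a (Finset.mem_univ a)
    rwa [hg]
  exact ⟨fun a₁ a₂ he => (h _ (hmem a₁)).unique rfl he.symm, hmem⟩

theorem injective_and_le_one_sub_inv_of_existsUnique {N : ℕ} {x : Fin N → ℕ}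
    (hx : ∀ k ∈ Finset.Icc 1 N, ∃! i, x i = k) {p : Fin N → ℝ}
    (hp : ∀ i, p i = ((x i : ℝ) - 1) / N) :
    Function.Injective p ∧ ∀ i, p i ≤ 1 - (N : ℝ)⁻¹ := by
  obtain ⟨hinj, hmem⟩ := injective_and_mem_of_existsUnique (by simp) hx
  refine ⟨fun i j hij => hinj ?_, fun i => ?_⟩
  · have hN : (N : ℝ) ≠ 0 := by exact_mod_cast i.pos.ne'
    rw [hp, hp, div_left_inj' hN, sub_left_inj] at hij
    exact_mod_cast hij
  · have hN : (0 : ℝ) < N := by exact_mod_cast i.pos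
    have hxN : (x i : ℝ) ≤ N := by exact_mod_cast (Finset.mem_Icc.1 (hmem i)).2
    rw [hp, div_le_iff₀ hN, sub_mul, inv_mul_cancel₀ hN.ne']
    linarith

theorem abs_sum_tail_sub_le {ι : Type*} [Fintype ι] {a : ι → ℝ} {C : ℝ} (hC : 0 ≤ C)
    (ha : ∀ i, |a i| ≤ C) {p : ι → ℝ} (hp : Function.Injective p) {b y : ℝ}
    (hpb : ∀ i, p i ≤ b) :
    |∑ i, a i * (if y ≤ p i then 1 else 0)
      - (∑ i, a i * (if p i ≤ b then 1 else 0) - ∑ i, a i * (if p i ≤ y then 1 else 0))| ≤ C := by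
  have hatom : ∑ i, a i * (if y ≤ p i then 1 else 0)
      - (∑ i, a i * (if p i ≤ b then 1 else 0) - ∑ i, a i * (if p i ≤ y then 1 else 0))
      = ∑ i, a i * (if p i = y then 1 else 0) := by
    rw [← Finset.sum_sub_distrib, ← Finset.sum_sub_distrib]
    refine Finset.sum_congr rfl fun i _ => ?_
    rw [if_pos (hpb i)]
    split_ifs <;> grind
  rw [hatom]
  by_cases hy : ∃ i, p i = y
  · obtain ⟨i₀, hi₀⟩ := hy
    rw [Finset.sum_eq_single i₀
      (fun j _ hj => by rw [if_neg fun h => hj (hp (h.trans hi₀.symm)), mul_zero]) (by simp)]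
    simpa [hi₀] using ha i₀
  · simpa [not_exists.1 hy] using hC

theorem abs_inv_mul_sum_mul_ite_le {N : ℕ} (a : Fin N → ℝ) (P : Fin N → Prop) [DecidablePred P] :
    |(N : ℝ)⁻¹ * ∑ i, a i * (if P i then 1 else 0)| ≤ (N : ℝ)⁻¹ * ∑ i, |a i| := by
  rw [abs_mul, abs_inv, Nat.abs_cast]
  refine mul_le_mul_of_nonneg_left ((Finset.abs_sum_le_sum_abs _ _).trans
    (Finset.sum_le_sum fun i _ => ?_)) (by positivity)
  split_ifs <;> simp

theorem tendstoUniformlyOn_of_tendsto_iSup_abs_sub {ι α : Type*} {l : Filter ι}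
    {f : ι → α → ℝ} {φ : α → ℝ} {s : Set α}
    (hbdd : ∀ n, BddAbove (range fun x : s => |f n x - φ x|))
    (h : Tendsto (fun n => ⨆ x : s, |f n x - φ x|) l (𝓝 0)) :
    TendstoUniformlyOn f φ l s := by
  rw [Metric.tendstoUniformlyOn_iff]
  intro ε hε
  filter_upwards [h.eventually (gt_mem_nhds hε)] with n hn x hx
  rw [dist_comm, Real.dist_eq]
  exact (le_ciSup (hbdd n) ⟨x, hx⟩).trans_lt hn

theorem tendsto_one_sub_inv_nhdsWithin_Ico :
    Tendsto (fun N : ℕ => 1 - (N : ℝ)⁻¹) atTop (𝓝[Ico 0 1] 1) := by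
  refine tendsto_nhdsWithin_iff.2 ⟨?_, ?_⟩
  · simpa using (tendsto_inv_atTop_zero.comp tendsto_natCast_atTop_atTop).const_sub (1 : ℝ)
  · filter_upwards [eventually_ge_atTop 1] with N hN
    have hN' : (1 : ℝ) ≤ N := by exact_mod_cast hN
    exact ⟨sub_nonneg.2 (inv_le_one_of_one_le₀ hN'), sub_lt_self _ (by positivity)⟩

theorem tendsto_average_tail {a : (N : ℕ) → Fin N → ℝ} {C : ℝ} (ha : ∀ N i, |a N i| ≤ C)
    {p : (N : ℕ) → Fin N → ℝ} (hp : ∀ N, Function.Injective (p N))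
    (hp_le : ∀ N i, p N i ≤ 1 - (N : ℝ)⁻¹)
    {F : ℝ → ℝ} (hF : IntervalIntegrable F volume 0 1)
    (hunif : Tendsto (fun N : ℕ => ⨆ y : Ico (0 : ℝ) 1,
      |(N : ℝ)⁻¹ * (∑ i, a N i * (if p N i ≤ (y : ℝ) then 1 else 0)) - ∫ z in (0 : ℝ)..y, F z|)
      atTop (𝓝 0))
    {y : ℝ} (hy : y ∈ Ico (0 : ℝ) 1) :
    Tendsto (fun N : ℕ => (N : ℝ)⁻¹ * ∑ i, a N i * (if y ≤ p N i then 1 else 0))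
      atTop (𝓝 (∫ z in y..1, F z)) := by
  set B : ℕ → ℝ → ℝ := fun N y => (N : ℝ)⁻¹ * ∑ i, a N i * (if p N i ≤ y then 1 else 0)
  set Φ : ℝ → ℝ := fun y => ∫ z in (0 : ℝ)..y, F z
  have hΦ : ContinuousOn Φ (Icc 0 1) := by
    simpa [uIcc_of_le zero_le_one] using
      intervalIntegral.continuousOn_primitive_interval' hF left_mem_uIcc
  obtain ⟨M, hM⟩ := isCompact_Icc.exists_bound_of_continuousOn hΦ
  have hbdd : ∀ N, BddAbove (range fun y : Ico (0 : ℝ) 1 => |B N y - Φ y|) := fun N =>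
    ⟨(N : ℝ)⁻¹ * ∑ i, |a N i| + M, by
      rintro _ ⟨y, rfl⟩
      exact (abs_sub _ _).trans (add_le_add (abs_inv_mul_sum_mul_ite_le _ _)
        (hM y (Ico_subset_Icc_self y.2)))⟩
  have hBΦ := tendstoUniformlyOn_of_tendsto_iSup_abs_sub hbdd hunif
  have hlast : Tendsto (fun N : ℕ => B N (1 - (N : ℝ)⁻¹)) atTop (𝓝 (Φ 1)) :=
    hBΦ.tendsto_comp ((hΦ 1 ⟨zero_le_one, le_rfl⟩).mono Ico_subset_Icc_self)
      tendsto_one_sub_inv_nhdsWithin_Ico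
  have hC : 0 ≤ C := (abs_nonneg _).trans (ha 1 0)
  have herr : Tendsto (fun N : ℕ => (N : ℝ)⁻¹ * ∑ i, a N i * (if y ≤ p N i then 1 else 0)
      - (B N (1 - (N : ℝ)⁻¹) - B N y)) atTop (𝓝 0) := by
    refine squeeze_zero_norm (fun N => ?_) (tendsto_const_div_atTop_nhds_zero_nat C)
    rw [Real.norm_eq_abs, ← mul_sub, ← mul_sub, abs_mul, abs_inv, Nat.abs_cast, div_eq_inv_mul]
    exact mul_le_mul_of_nonneg_left (abs_sum_tail_sub_le hC (ha N) (hp N) (hp_le N))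
      (by positivity)
  rw [← intervalIntegral.integral_interval_sub_left hF
    (hF.mono_set (uIcc_subset_uIcc_left (by
      rw [uIcc_of_le zero_le_one]; exact Ico_subset_Icc_self hy)))]
  simpa using herr.add (hlast.sub (hBΦ.tendsto_at hy))

theorem tendsto_average_tail_integral {X : Type*} [TopologicalSpace X] [MeasurableSpace X]
    [OpensMeasurableSpace X] {w : (N : ℕ) → Fin N → X} {μ0 : ℝ → Measure X}
    (hμ0 : ∀ z, IsProbabilityMeasure (μ0 z)) (g : X →ᵇ ℝ)
    (hg : AEMeasurable (fun z => ∫ x, g x ∂(μ0 z)) volume)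
    {p : (N : ℕ) → Fin N → ℝ} (hp : ∀ N, Function.Injective (p N))
    (hp_le : ∀ N i, p N i ≤ 1 - (N : ℝ)⁻¹)
    (hunif : Tendsto (fun N : ℕ => ⨆ y : Ico (0 : ℝ) 1,
      |(N : ℝ)⁻¹ * (∑ i, g (w N i) * (if p N i ≤ (y : ℝ) then 1 else 0))
        - ∫ z in (0 : ℝ)..y, ∫ x, g x ∂(μ0 z)|) atTop (𝓝 0))
    {y : ℝ} (hy : y ∈ Ico (0 : ℝ) 1) :
    Tendsto (fun N : ℕ => (N : ℝ)⁻¹ * ∑ i, g (w N i) * (if y ≤ p N i then 1 else 0))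
      atTop (𝓝 (∫ z in y..1, ∫ x, g x ∂(μ0 z))) := by
  have hF : IntegrableOn (fun z => ∫ x, g x ∂(μ0 z)) (uIcc 0 1) :=
    Measure.integrableOn_of_bounded isCompact_uIcc.measure_lt_top.ne hg.aestronglyMeasurable
      (ae_of_all _ fun z => by
        have := hμ0 z
        exact norm_integral_le_norm (μ0 z) g)
  exact tendsto_average_tail (fun N i => g.norm_coe_le_norm (w N i)) hp hp_le
    hF.intervalIntegrable hunif hy

theorem MeasureTheory.TendstoInMeasure.const_of_sub {Ω ι : Type*} [MeasurableSpace Ω]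
    {μ : Measure Ω} {l : Filter ι} {f : ι → Ω → ℝ} {m : ι → ℝ} {L : ℝ}
    (hf : TendstoInMeasure μ (fun n ω => f n ω - m n) l 0) (hm : Tendsto m l (𝓝 L)) :
    TendstoInMeasure μ f l fun _ => L := by
  rw [tendstoInMeasure_iff_dist] at hf ⊢
  intro ε hε
  refine tendsto_of_tendsto_of_tendsto_of_le_of_le' tendsto_const_nhds (hf (ε / 2) (half_pos hε))
    (Eventually.of_forall fun _ => zero_le) ?_
  filter_upwards [(tendsto_iff_dist_tendsto_zero.1 hm).eventually (gt_mem_nhds (half_pos hε))]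
    with n hn
  refine measure_mono fun ω hω => ?_
  simp only [mem_ofPred_eq, Pi.zero_apply, Real.dist_eq, sub_zero] at hω hn ⊢
  linarith [abs_sub_le (f n ω) (m n) L]

theorem integral_ite_le_mul {Ω : Type*} [MeasurableSpace Ω] {μ : Measure Ω} {τ : Ω → ℝ}
    (hτ : Measurable τ) (t c : ℝ) :
    ∫ ω, (if τ ω ≤ t then 1 else 0) * c ∂μ = μ.real {ω | τ ω ≤ t} * c := by
  rw [integral_mul_const, ← integral_indicator_one (measurableSet_le hτ measurable_const)]
  congr 2 with ω

section WeakLaw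

variable {Ω : Type*} [MeasurableSpace Ω] {μ : Measure Ω} [IsProbabilityMeasure μ]

theorem meas_ge_abs_average_sub_le {ι : Type*} [Fintype ι] {X : ι → Ω → ℝ}
    (hX : ∀ i, MemLp (X i) 2 μ) (hindep : Pairwise fun i j => X i ⟂ᵢ[μ] X j) {v : ℝ}
    (hv : ∀ i, variance (X i) μ ≤ v) {δ : ℝ} (hδ : 0 < δ) :
    μ {ω | δ ≤ |(Fintype.card ι : ℝ)⁻¹ * ∑ i, X i ω - (Fintype.card ι : ℝ)⁻¹ * ∑ i, μ[X i]|}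
      ≤ ENNReal.ofReal (v / (Fintype.card ι * δ ^ 2)) := by
  set n : ℝ := (Fintype.card ι : ℝ)
  have hsum : (fun ω => n⁻¹ * ∑ i, X i ω) = fun ω => n⁻¹ * (∑ i, X i) ω := by
    simp only [Finset.sum_apply]
  have hS : MemLp (fun ω => n⁻¹ * ∑ i, X i ω) 2 μ := by
    rw [hsum]
    exact (memLp_finsetSum' _ fun i _ => hX i).const_mul _
  have hmean : μ[fun ω => n⁻¹ * ∑ i, X i ω] = n⁻¹ * ∑ i, μ[X i] := by
    rw [integral_const_mul, integral_finsetSum _ fun i _ => (hX i).integrable one_le_two]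
  have hvar : variance (fun ω => n⁻¹ * ∑ i, X i ω) μ ≤ v / n := by
    calc variance (fun ω => n⁻¹ * ∑ i, X i ω) μ = n⁻¹ ^ 2 * ∑ i, variance (X i) μ := by
          rw [hsum, variance_const_mul, IndepFun.variance_sum (fun i _ => hX i)
            fun i _ j _ hij => hindep hij]
      _ ≤ n⁻¹ ^ 2 * (n * v) := by
          gcongr
          exact (Finset.sum_le_sum fun i _ => hv i).trans_eq (by simp [n])
      _ = v / n := by
          rcases eq_or_ne n 0 with hn | hn
          · simp [hn]
          · field_simp
  calc μ {ω | δ ≤ |n⁻¹ * ∑ i, X i ω - n⁻¹ * ∑ i, μ[X i]|}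
      ≤ ENNReal.ofReal (variance (fun ω => n⁻¹ * ∑ i, X i ω) μ / δ ^ 2) := by
        simpa only [hmean] using meas_ge_le_variance_div_sq hS hδ
    _ ≤ ENNReal.ofReal (v / (n * δ ^ 2)) := by
        rw [← div_div]
        gcongr

theorem tendstoInMeasure_average_sub_average_integral {X : (N : ℕ) → Fin N → Ω → ℝ}
    (hX : ∀ N i, MemLp (X N i) 2 μ) (hindep : ∀ N, Pairwise fun i j => X N i ⟂ᵢ[μ] X N j)
    {v : ℝ} (hv : ∀ N i, variance (X N i) μ ≤ v) :
    TendstoInMeasure μ (fun (N : ℕ) ω => (N : ℝ)⁻¹ * ∑ i, X N i ω - (N : ℝ)⁻¹ * ∑ i, μ[X N i])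
      atTop 0 := by
  refine tendstoInMeasure_iff_dist.2 fun δ hδ => ?_
  have hbound : Tendsto (fun N : ℕ => ENNReal.ofReal (v / (N * δ ^ 2))) atTop (𝓝 0) := by
    simpa using ENNReal.tendsto_ofReal (tendsto_const_nhds.div_atTop
      (tendsto_natCast_atTop_atTop.atTop_mul_const (pow_pos hδ 2)))
  refine tendsto_of_tendsto_of_tendsto_of_le_of_le tendsto_const_nhds hbound
    (fun _ => zero_le) fun N => ?_
  simpa [Real.dist_eq] using meas_ge_abs_average_sub_le (hX N) (hindep N) (hv N) hδ

theorem tendstoInMeasure_average_indicator_sub {τ : (N : ℕ) → Fin N → Ω → ℝ}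
    (hτ : ∀ N i, Measurable (τ N i)) (hindep : ∀ N, iIndepFun (τ N) μ) (t : ℝ)
    {c : (N : ℕ) → Fin N → ℝ} (hc : ∀ N i, c N i ∈ Icc (0 : ℝ) 1) :
    TendstoInMeasure μ (fun (N : ℕ) ω => (N : ℝ)⁻¹ * ∑ i, (if τ N i ω ≤ t then 1 else 0) * c N i
      - (N : ℝ)⁻¹ * ∑ i, μ.real {ω | τ N i ω ≤ t} * c N i) atTop 0 := by
  have hφ : ∀ N i, Measurable fun r : ℝ => (if r ≤ t then (1 : ℝ) else 0) * c N i := fun N i =>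
    (Measurable.ite measurableSet_Iic measurable_const measurable_const).mul_const _
  have hX : ∀ N i ω, (if τ N i ω ≤ t then (1 : ℝ) else 0) * c N i ∈ Icc (0 : ℝ) 1 := by
    intro N i ω
    split_ifs <;> simp [hc N i]
  have hmean : ∀ N i, ∫ ω, (if τ N i ω ≤ t then (1 : ℝ) else 0) * c N i ∂μ
      = μ.real {ω | τ N i ω ≤ t} * c N i := fun N i => integral_ite_le_mul (hτ N i) t (c N i)
  simpa only [hmean] using tendstoInMeasure_average_sub_average_integral
    (X := fun N i ω => (if τ N i ω ≤ t then 1 else 0) * c N i)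
    (fun N i => MemLp.of_bound ((hφ N i).comp (hτ N i)).aestronglyMeasurable 1
      (ae_of_all _ fun ω => abs_le.2 ⟨(neg_nonpos.2 zero_le_one).trans (hX N i ω).1, (hX N i ω).2⟩))
    (fun N i j hij => ((hindep N).indepFun hij).comp (hφ N i) (hφ N j))
    (fun N i => variance_le_sq_of_bounded (ae_of_all _ (hX N i))
      ((hφ N i).comp (hτ N i)).aemeasurable)

end WeakLaw

def expNegMul (t : ℝ≥0) : ℝ≥0 →ᵇ ℝ :=
  BoundedContinuousFunction.ofNormedAddCommGroup (fun x : ℝ≥0 => rexp (-(x : ℝ) * t))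
    (by fun_prop) 1 fun x => by
      rw [Real.norm_eq_abs, abs_of_pos (exp_pos _), exp_le_one_iff, neg_mul, neg_nonpos]
      positivity

theorem expNegMul_apply (t x : ℝ≥0) : expNegMul t x = rexp (-(x : ℝ) * t) := rfl

theorem stmt11_general
    (Ω : Type) [MeasureSpace Ω] [IsProbabilityMeasure (ℙ : Measure Ω)]
    (w : (N : ℕ) → Fin N → ℝ≥0)
    (τ : (N : ℕ) → Fin N → Ω → ℝ)
    (hτmeas : ∀ N i, Measurable (τ N i))
    (hτindep : ∀ N, iIndepFun (τ N) ℙ)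
    (hτdist : ∀ N i (t : ℝ), 0 ≤ t →
      (ℙ : Measure Ω) {ω | τ N i ω ≤ t} = ENNReal.ofReal (1 - rexp (-(w N i : ℝ) * t)))
    (x0 : (N : ℕ) → Fin N → ℕ)
    (hx0 : ∀ N, ∀ k ∈ Finset.Icc 1 N, ∃! i : Fin N, x0 N i = k)
    (y0 : (N : ℕ) → Fin N → ℝ)
    (hy0 : ∀ N i, y0 N i = ((x0 N i : ℝ) - 1) / N)
    (μ0 : ℝ → Measure ℝ≥0) (hμ0 : ∀ z, IsProbabilityMeasure (μ0 z))
    (hμ0meas : ∀ g : ℝ≥0 →ᵇ ℝ, AEMeasurable (fun z => ∫ x, g x ∂(μ0 z)) volume)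
    (hinit : ∀ g : ℝ≥0 →ᵇ ℝ,
      Tendsto (fun N : ℕ => ⨆ y : Ico (0 : ℝ) 1,
        |(N : ℝ)⁻¹ * (∑ i : Fin N, g (w N i) * (if y0 N i ≤ (y : ℝ) then (1 : ℝ) else 0))
          - ∫ z in (0 : ℝ)..(y : ℝ), ∫ x, g x ∂(μ0 z)|) atTop (𝓝 0))
    (y : ℝ) (hy : y ∈ Ico (0 : ℝ) 1) (t : ℝ) (ht : 0 ≤ t) :
    ∀ ε > (0 : ℝ), Tendsto
      (fun N : ℕ => (ℙ : Measure Ω)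
        {ω | ε ≤ |(y + (N : ℝ)⁻¹ * ∑ i : Fin N,
              (if τ N i ω ≤ t then (1 : ℝ) else 0) * (if y ≤ y0 N i then (1 : ℝ) else 0))
            - (1 - ∫ z in y..1, ∫ x, rexp (-(x : ℝ) * t) ∂(μ0 z))|})
      atTop (𝓝 0) := by
  lift t to ℝ≥0 using ht
  have hpos N := injective_and_le_one_sub_inv_of_existsUnique (hx0 N) (hy0 N)
  have hprob (N : ℕ) (i : Fin N) :
      (ℙ : Measure Ω).real {ω | τ N i ω ≤ t} = 1 - rexp (-(w N i : ℝ) * t) := by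
    have hexp : rexp (-(w N i : ℝ) * t) ≤ 1 := by
      rw [exp_le_one_iff, neg_mul, neg_nonpos]
      positivity
    rw [measureReal_def, hτdist N i t t.2, ENNReal.toReal_ofReal (sub_nonneg.2 hexp)]
  have hcount := tendsto_average_tail_integral hμ0 (const ℝ≥0 1) (hμ0meas _)
    (fun N => (hpos N).1) (fun N => (hpos N).2) (hinit _) hy
  have hdecay := tendsto_average_tail_integral hμ0 (expNegMul t) (hμ0meas _)
    (fun N => (hpos N).1) (fun N => (hpos N).2) (hinit _) hy
  have := hμ0
  simp only [const_apply, one_mul, integral_const, probReal_univ, smul_eq_mul, mul_one,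
    intervalIntegral.integral_const] at hcount
  simp only [expNegMul_apply] at hdecay
  have hmean : Tendsto (fun N : ℕ => y + (N : ℝ)⁻¹ * ∑ i, (ℙ : Measure Ω).real {ω | τ N i ω ≤ t}
      * (if y ≤ y0 N i then 1 else 0)) atTop
      (𝓝 (1 - ∫ z in y..1, ∫ x, rexp (-(x : ℝ) * t) ∂(μ0 z))) := by
    convert (hcount.sub hdecay).const_add y using 2
    · simp only [hprob, sub_mul, one_mul, Finset.sum_sub_distrib, mul_sub]
    · ring
  have hLLN := tendstoInMeasure_average_indicator_sub hτmeas hτindep t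
    (c := fun N i => if y ≤ y0 N i then 1 else 0) fun N i => by split_ifs <;> simp
  have hconv := TendstoInMeasure.const_of_sub
    (f := fun (N : ℕ) ω => y + (N : ℝ)⁻¹ * ∑ i, (if τ N i ω ≤ t then 1 else 0)
      * (if y ≤ y0 N i then 1 else 0))
    (by simpa only [add_sub_add_left_eq_sub] using hLLN) hmean
  simpa only [Real.dist_eq] using tendstoInMeasure_iff_dist.1 hconv

/-- `y_C^{(N)}(y,t) = y + (1/N) Σ χ_{τ_i ≤ t} χ_{y_{i,0} ≥ y}` converges in
probability to `y_C(y,t) = 1 - ∫_y^1 ∫ e^{-wt} μ_{z,0}(dw) dz`. -/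
theorem stmt11
    (Ω : Type) [MeasureSpace Ω] [IsProbabilityMeasure (ℙ : Measure Ω)]
    (w : (N : ℕ) → Fin N → ℝ≥0) (hw : ∀ N i, 0 < w N i)
    (τ : (N : ℕ) → Fin N → Ω → ℝ)
    (hτmeas : ∀ N i, Measurable (τ N i))
    (hτindep : ∀ N, iIndepFun (τ N) ℙ)
    (hτdist : ∀ N i (t : ℝ), 0 ≤ t →
      (ℙ : Measure Ω) {ω | τ N i ω ≤ t} = ENNReal.ofReal (1 - rexp (-(w N i : ℝ) * t)))
    (x0 : (N : ℕ) → Fin N → ℕ)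
    (hx0 : ∀ N, ∀ k ∈ Finset.Icc 1 N, ∃! i : Fin N, x0 N i = k)
    (y0 : (N : ℕ) → Fin N → ℝ)
    (hy0 : ∀ N i, y0 N i = ((x0 N i : ℝ) - 1) / N)
    (μ0 : ℝ → Measure ℝ≥0) (hμ0 : ∀ z, IsProbabilityMeasure (μ0 z))
    (hμ0meas : ∀ g : ℝ≥0 →ᵇ ℝ, AEMeasurable (fun z => ∫ x, g x ∂(μ0 z)) volume)
    (hinit : ∀ g : ℝ≥0 →ᵇ ℝ,
      Tendsto (fun N : ℕ => ⨆ y : Ico (0 : ℝ) 1,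
        |(N : ℝ)⁻¹ * (∑ i : Fin N, g (w N i) * (if y0 N i ≤ (y : ℝ) then (1 : ℝ) else 0))
          - ∫ z in (0 : ℝ)..(y : ℝ), ∫ x, g x ∂(μ0 z)|) atTop (𝓝 0))
    (y : ℝ) (hy : y ∈ Ico (0 : ℝ) 1) (t : ℝ) (ht : 0 ≤ t) :
    ∀ ε > (0 : ℝ), Tendsto
      (fun N : ℕ => (ℙ : Measure Ω)
        {ω | ε ≤ |(y + (N : ℝ)⁻¹ * ∑ i : Fin N,
              (if τ N i ω ≤ t then (1 : ℝ) else 0) * (if y ≤ y0 N i then (1 : ℝ) else 0))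
            - (1 - ∫ z in y..1, ∫ x, rexp (-(x : ℝ) * t) ∂(μ0 z))|})
      atTop (𝓝 0) :=
  stmt11_general Ω w τ hτmeas hτindep hτdist x0 hx0 y0 hy0 μ0 hμ0 hμ0meas hinit y hy t ht
end
end

section
/- Define, for y ∈ [0,1) and t ≥ 0, the random variable y_C^{(N)}(y,t) = y + (1/N) Σ_{i=1}^N χ_{τ_i^{(N)} ≤ t} χ_{y_{i,0}^{(N)} ≥ y} and the deterministic function y_C(y,t) = 1 − ∫_y^1 ∫_{[0,∞)} e^{−wt} μ_{z,0}(dw) dz. Then for every t ≥ 0, lim_{N→∞} sup_{y∈[0,1)} E[ ( y_C(y,t) − y_C^{(N)}(y,t) )² ] = 0; that is, y_C^{(N)}(y,t) converges to y_C(y,t) in L², uniformly in y. -/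
open MeasureTheory ProbabilityTheory Filter Topology Real Set NNReal BoundedContinuousFunction

noncomputable section

/-!
Write `p(w) = 1 - e^{-wt}`. For fixed `y` the random sum is an average of `N` independent
`[0,1]`-valued variables with means `p(w_i) 1{y ≤ y_i}`, so its mean-square distance to
`y_C(y,t) - y` is the squared bias plus a variance of at most `1/(4N)`.

Because every `μ_z` is a probability measure, `y_C(y,t) - y = ∫_y^1 ∫ p dμ_z dz`. The empirical
tail sum `N⁻¹ Σ p(w_i) 1{y ≤ y_i}` is the total minus the empirical distribution function
at `y`, up to the one index with `y_i = y` (the positions are distinct), and the total is the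
empirical distribution function at `(N-1)/N`. So if `ε_N` is the uniform error in the hypothesis
on the initial data for `g = p`, the bias is at most `2 ε_N + 2/N` uniformly in `y`.
-/

section Permutation

variable {ι β : Type*} [Fintype ι] [DecidableEq β] {s : Finset β} {x : ι → β}

lemma mem_of_forall_existsUnique (hcard : s.card = Fintype.card ι)
    (hx : ∀ k ∈ s, ∃! i, x i = k) (i : ι) : x i ∈ s := by
  have hsub : s ⊆ Finset.univ.image x := fun k hk => by
    obtain ⟨j, hj, -⟩ := hx k hk
    exact Finset.mem_image.2 ⟨j, Finset.mem_univ _, hj⟩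
  rw [Finset.eq_of_subset_of_card_le hsub (hcard ▸ Finset.card_image_le)]
  exact Finset.mem_image_of_mem x (Finset.mem_univ i)

lemma injective_of_forall_existsUnique (hcard : s.card = Fintype.card ι)
    (hx : ∀ k ∈ s, ∃! i, x i = k) : Function.Injective x := fun _ j hij =>
  (hx (x j) (mem_of_forall_existsUnique hcard hx j)).unique hij rfl

end Permutation

section Tails

variable {ι : Type*}

lemma sum_mul_ite_le_add_sum_mul_ite_ge (s : Finset ι) (a y0 : ι → ℝ) (y : ℝ) :
    ∑ i ∈ s, a i * (if y ≤ y0 i then 1 else 0) + ∑ i ∈ s, a i * (if y0 i ≤ y then 1 else 0)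
      = ∑ i ∈ s, a i + ∑ i ∈ s, a i * (if y0 i = y then 1 else 0) := by
  simp only [← Finset.sum_add_distrib]
  refine Finset.sum_congr rfl fun i _ => ?_
  rcases lt_trichotomy (y0 i) y with h | h | h
  · simp [h.le, h.not_ge, h.ne]
  · simp [h]
  · simp [h.le, h.not_ge, h.ne']

lemma abs_sum_mul_ite_eq_le_one [Fintype ι] {a y0 : ι → ℝ} (ha : ∀ i, |a i| ≤ 1)
    (hy0 : Function.Injective y0) (y : ℝ) : |∑ i, a i * (if y0 i = y then 1 else 0)| ≤ 1 := by
  by_cases hy : ∃ j, y0 j = y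
  · obtain ⟨j, rfl⟩ := hy
    rw [Finset.sum_eq_single j (fun i _ hij => by simp [hy0.ne hij]) (by simp)]
    simpa using ha j
  · push Not at hy
    simp [hy]

lemma abs_increment_sub_tail_sum_le [Fintype ι] {a y0 : ι → ℝ} (ha : ∀ i, |a i| ≤ 1)
    (hy0 : Function.Injective y0) {c : ℝ} (hc : 0 ≤ c) {G : ℝ → ℝ} {y ys ε δ : ℝ}
    (hys : ∀ i, y0 i ≤ ys) (hG : |G 1 - G ys| ≤ δ)
    (hy : |c * ∑ i, a i * (if y0 i ≤ y then 1 else 0) - G y| ≤ ε)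
    (hys_sum : |c * ∑ i, a i * (if y0 i ≤ ys then 1 else 0) - G ys| ≤ ε) :
    |G 1 - G y - c * ∑ i, a i * (if y ≤ y0 i then 1 else 0)| ≤ 2 * ε + δ + c := by
  have htotal : ∑ i, a i * (if y0 i ≤ ys then 1 else 0) = ∑ i, a i := by simp [hys]
  have hoverlap : |c * ∑ i, a i * (if y ≤ y0 i then 1 else 0)
      + c * ∑ i, a i * (if y0 i ≤ y then 1 else 0) - c * ∑ i, a i| ≤ c := by
    rw [← mul_add, ← mul_sub, sum_mul_ite_le_add_sum_mul_ite_ge, add_sub_cancel_left, abs_mul,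
      abs_of_nonneg hc]
    exact mul_le_of_le_one_right hc (abs_sum_mul_ite_eq_le_one ha hy0 y)
  rw [htotal] at hys_sum
  rw [abs_le] at *
  constructor <;> linarith

lemma abs_inv_card_mul_sum_le_one [Fintype ι] {a : ι → ℝ} (ha : ∀ i, |a i| ≤ 1) :
    |(Fintype.card ι : ℝ)⁻¹ * ∑ i, a i| ≤ 1 := by
  rw [abs_mul, abs_inv, Nat.abs_cast]
  calc (Fintype.card ι : ℝ)⁻¹ * |∑ i, a i| ≤ (Fintype.card ι : ℝ)⁻¹ * Fintype.card ι := by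
        gcongr
        simpa using (Finset.abs_sum_le_sum_abs a Finset.univ).trans
          (Finset.sum_le_card_nsmul _ _ 1 fun i _ => ha i)
    _ ≤ 1 := inv_mul_le_one_of_le₀ le_rfl (Nat.cast_nonneg _)

end Tails

section Profile

lemma intervalIntegrable_of_abs_le {φ : ℝ → ℝ} (hφm : AEMeasurable φ) {C : ℝ}
    (hφ : ∀ z, |φ z| ≤ C) (a b : ℝ) : IntervalIntegrable φ volume a b :=
  (intervalIntegrable_const (c := C)).mono_fun' hφm.aestronglyMeasurable.restrict
    (ae_of_all _ hφ)

lemma abs_intervalIntegral_le_of_abs_le {φ : ℝ → ℝ} {C : ℝ} (hφ : ∀ z, |φ z| ≤ C) (a b : ℝ) :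
    |∫ z in a..b, φ z| ≤ C * |b - a| := by
  simpa only [Real.norm_eq_abs] using intervalIntegral.norm_integral_le_of_norm_le_const
    fun z _ => (Real.norm_eq_abs _).trans_le (hφ z)

lemma abs_integral_sub_average_tail_le {N : ℕ} (hN : 0 < N) {x0 : Fin N → ℕ}
    (hx0 : ∀ k ∈ Finset.Icc 1 N, ∃! i, x0 i = k) {y0 : Fin N → ℝ}
    (hy0 : ∀ i, y0 i = ((x0 i : ℝ) - 1) / N) {p : Fin N → ℝ} (hp : ∀ i, |p i| ≤ 1)
    {φ : ℝ → ℝ} (hφm : AEMeasurable φ) (hφ : ∀ z, |φ z| ≤ 1) {ε : ℝ}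
    (hε : ∀ y ∈ Ico (0 : ℝ) 1,
      |(N : ℝ)⁻¹ * ∑ i, p i * (if y0 i ≤ y then 1 else 0) - ∫ z in (0 : ℝ)..y, φ z| ≤ ε)
    {y : ℝ} (hy : y ∈ Ico (0 : ℝ) 1) :
    |(∫ z in y..1, φ z) - (N : ℝ)⁻¹ * ∑ i, p i * (if y ≤ y0 i then 1 else 0)|
      ≤ 2 * ε + 2 / N := by
  have hcard : (Finset.Icc 1 N).card = Fintype.card (Fin N) := by simp
  have hN' : (0 : ℝ) < N := Nat.cast_pos.2 hN
  set ys : ℝ := ((N : ℝ) - 1) / N with hys_def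
  have hys : ys ∈ Ico (0 : ℝ) 1 := by
    refine ⟨div_nonneg (sub_nonneg.2 (Nat.one_le_cast.2 hN)) hN'.le, ?_⟩
    rw [div_lt_one hN']; linarith
  have hy0le : ∀ i, y0 i ≤ ys := fun i => by
    rw [hy0]
    refine div_le_div_of_nonneg_right (sub_le_sub_right ?_ 1) hN'.le
    exact_mod_cast (Finset.mem_Icc.1 (mem_of_forall_existsUnique hcard hx0 i)).2
  have hy0inj : Function.Injective y0 := fun i j hij =>
    injective_of_forall_existsUnique hcard hx0 <| by
      rwa [hy0, hy0, div_left_inj' hN'.ne', sub_left_inj, Nat.cast_inj] at hij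
  have hint := intervalIntegrable_of_abs_le hφm hφ
  have hG : |(∫ z in (0 : ℝ)..1, φ z) - ∫ z in (0 : ℝ)..ys, φ z| ≤ 1 / N := by
    rw [intervalIntegral.integral_interval_sub_left (hint 0 1) (hint 0 ys)]
    calc |∫ z in ys..1, φ z| ≤ 1 * |1 - ys| := abs_intervalIntegral_le_of_abs_le hφ ys 1
      _ = 1 / N := by
          rw [one_mul, abs_of_nonneg (by linarith [hys.2]), hys_def]
          field_simp
          ring
  have hbias := abs_increment_sub_tail_sum_le hp hy0inj (inv_nonneg.2 hN'.le)
    (G := fun y => ∫ z in (0 : ℝ)..y, φ z) hy0le hG (hε y hy) (hε ys hys)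
  rw [intervalIntegral.integral_interval_sub_left (hint 0 1) (hint 0 y)] at hbias
  calc _ ≤ 2 * ε + 1 / N + (N : ℝ)⁻¹ := hbias
    _ = 2 * ε + 2 / N := by ring

lemma bddAbove_range_abs_average_sub_integral {N : ℕ} {p y0 : Fin N → ℝ}
    (hp : ∀ i, |p i| ≤ 1) {φ : ℝ → ℝ} (hφ : ∀ z, |φ z| ≤ 1) :
    BddAbove (range fun y : Ico (0 : ℝ) 1 =>
      |(N : ℝ)⁻¹ * ∑ i, p i * (if y0 i ≤ (y : ℝ) then 1 else 0) - ∫ z in (0 : ℝ)..y, φ z|) := by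
  refine ⟨2, forall_mem_range.2 fun y => ?_⟩
  have hsum : |(N : ℝ)⁻¹ * ∑ i, p i * (if y0 i ≤ (y : ℝ) then 1 else 0)| ≤ 1 := by
    simpa using abs_inv_card_mul_sum_le_one (ι := Fin N) fun i => by split_ifs <;> simp [hp i]
  have hint : |∫ z in (0 : ℝ)..y, φ z| ≤ 1 := by
    calc |∫ z in (0 : ℝ)..y, φ z| ≤ 1 * |(y : ℝ) - 0| := abs_intervalIntegral_le_of_abs_le hφ 0 y
      _ ≤ 1 := by rw [one_mul, sub_zero, abs_of_nonneg y.2.1]; exact y.2.2.le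
  exact (abs_sub _ _).trans (by linarith)

end Profile

section MeanSquare

variable {Ω : Type*} [MeasurableSpace Ω] {μ : Measure Ω}

lemma integral_ite_le_one_zero {X : Ω → ℝ} (hX : Measurable X) (t : ℝ) :
    ∫ ω, (if X ω ≤ t then (1 : ℝ) else 0) ∂μ = μ.real {ω | X ω ≤ t} := by
  rw [← integral_indicator_one (show MeasurableSet {ω | X ω ≤ t} from hX measurableSet_Iic)]
  congr with ω

variable [IsProbabilityMeasure μ]

lemma integral_const_sub_sq {X : Ω → ℝ} (hX : MemLp X 2 μ) (a : ℝ) :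
    ∫ ω, (a - X ω) ^ 2 ∂μ = (a - μ[X]) ^ 2 + Var[X; μ] := by
  have hint : Integrable X μ := hX.integrable one_le_two
  calc ∫ ω, (a - X ω) ^ 2 ∂μ = ∫ ω, (a ^ 2 - 2 * a * X ω) + X ω ^ 2 ∂μ := by
        congr with ω; ring
    _ = a ^ 2 - 2 * a * μ[X] + μ[X ^ 2] := by
        have hlin : Integrable (fun ω => a ^ 2 - 2 * a * X ω) μ :=
          (integrable_const _).sub (hint.const_mul _)
        rw [integral_add hlin hX.integrable_sq, integral_sub (integrable_const _)
          (hint.const_mul _), integral_const_mul]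
        simp
    _ = (a - μ[X]) ^ 2 + Var[X; μ] := by
        rw [variance_eq_sub hX]; ring

lemma integral_const_sub_average_sq_le {ι : Type*} [Fintype ι] {X : ι → Ω → ℝ}
    (hXm : ∀ i, AEMeasurable (X i) μ) (hX : ∀ i, ∀ᵐ ω ∂μ, X i ω ∈ Icc (0 : ℝ) 1)
    (hind : Pairwise fun i j => IndepFun (X i) (X j) μ) (a : ℝ) :
    ∫ ω, (a - (Fintype.card ι : ℝ)⁻¹ * ∑ i, X i ω) ^ 2 ∂μ
      ≤ (a - (Fintype.card ι : ℝ)⁻¹ * ∑ i, μ[X i]) ^ 2 + (Fintype.card ι : ℝ)⁻¹ / 4 := by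
  set n : ℝ := (Fintype.card ι : ℝ)
  have hL2 : ∀ i, MemLp (X i) 2 μ := fun i =>
    memLp_of_bounded (hX i) (hXm i).aestronglyMeasurable 2
  have hvar : Var[fun ω => ∑ i, X i ω; μ] ≤ n / 4 := by
    rw [← Finset.sum_fn, IndepFun.variance_sum (fun i _ => hL2 i) fun i _ j _ hij => hind hij]
    calc ∑ i, Var[X i; μ] ≤ ∑ _i : ι, ((1 - 0) / 2 : ℝ) ^ 2 :=
          Finset.sum_le_sum fun i _ => variance_le_sq_of_bounded (hX i) (hXm i)
      _ = n / 4 := by simp [n]; ring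
  have hL2sum : MemLp (∑ i, X i) 2 μ := memLp_finsetSum' Finset.univ fun i _ => hL2 i
  have hsplit := integral_const_sub_sq (hL2sum.const_mul n⁻¹) a
  simp only [Finset.sum_apply] at hsplit
  rw [hsplit, variance_const_mul, integral_const_mul,
    integral_finsetSum _ fun i _ => (hL2 i).integrable one_le_two]
  gcongr
  calc n⁻¹ ^ 2 * Var[fun ω => ∑ i, X i ω; μ] ≤ n⁻¹ ^ 2 * (n / 4) := by gcongr
    _ ≤ n⁻¹ / 4 := by
        rcases eq_or_ne n 0 with hn | hn
        · simp [hn]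
        · field_simp; rfl

end MeanSquare

section Jumps

variable {Ω ι : Type*} [MeasurableSpace Ω] {μ : Measure Ω} [IsProbabilityMeasure μ] [Fintype ι]

lemma integral_const_sub_average_jumps_sq_le {τ : ι → Ω → ℝ} (hτm : ∀ i, Measurable (τ i))
    (hτ : iIndepFun τ μ) (t : ℝ) {c : ι → ℝ} (hc : ∀ i, c i ∈ Icc (0 : ℝ) 1) (a : ℝ) :
    ∫ ω, (a - (Fintype.card ι : ℝ)⁻¹ * ∑ i, (if τ i ω ≤ t then 1 else 0) * c i) ^ 2 ∂μ
      ≤ (a - (Fintype.card ι : ℝ)⁻¹ * ∑ i, μ.real {ω | τ i ω ≤ t} * c i) ^ 2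
        + (Fintype.card ι : ℝ)⁻¹ / 4 := by
  have hjump : ∀ i, Measurable fun x : ℝ => (if x ≤ t then (1 : ℝ) else 0) * c i := fun i =>
    (Measurable.ite measurableSet_Iic measurable_const measurable_const).mul_const _
  have hmean : ∀ i, ∫ ω, (if τ i ω ≤ t then (1 : ℝ) else 0) * c i ∂μ
      = μ.real {ω | τ i ω ≤ t} * c i := fun i => by
    rw [integral_mul_const, integral_ite_le_one_zero (hτm i)]
  simp_rw [← hmean]
  refine integral_const_sub_average_sq_le (fun i => ((hjump i).comp (hτm i)).aemeasurable)
    (fun i => ae_of_all _ fun ω => ?_) (fun i j hij => (hτ.comp _ hjump).indepFun hij) a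
  simp only [Function.comp_apply]
  split_ifs
  · simpa using hc i
  · simp

end Jumps

section JumpProbability

variable (t : ℝ) (ht : 0 ≤ t)

def jumpProbability : ℝ≥0 →ᵇ ℝ :=
  ofNormedAddCommGroup (fun w => 1 - rexp (-(w : ℝ) * t)) (by fun_prop) 1 fun w => by
    have hexp : rexp (-(w : ℝ) * t) ≤ 1 := exp_le_one_iff.2 (by nlinarith [w.coe_nonneg])
    rw [Real.norm_eq_abs, abs_le]
    constructor <;> linarith [exp_pos (-(w : ℝ) * t)]

lemma jumpProbability_nonneg (w : ℝ≥0) : 0 ≤ jumpProbability t ht w :=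
  sub_nonneg.2 (exp_le_one_iff.2 (by nlinarith [w.coe_nonneg]))

lemma abs_jumpProbability_le_one (w : ℝ≥0) : |jumpProbability t ht w| ≤ 1 := by
  rw [abs_of_nonneg (jumpProbability_nonneg t ht w)]
  exact sub_le_self _ (exp_pos _).le

lemma abs_integral_jumpProbability_le_one (ν : Measure ℝ≥0) [IsProbabilityMeasure ν] :
    |∫ x, jumpProbability t ht x ∂ν| ≤ 1 :=
  ((jumpProbability t ht).norm_integral_le_norm ν).trans
    (norm_ofNormedAddCommGroup_le _ zero_le_one _)

lemma integral_exp_neg_mul_eq_one_sub (ν : Measure ℝ≥0) [IsProbabilityMeasure ν] :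
    ∫ x, rexp (-(x : ℝ) * t) ∂ν = 1 - ∫ x, jumpProbability t ht x ∂ν := by
  calc ∫ x, rexp (-(x : ℝ) * t) ∂ν = ∫ x, (1 - jumpProbability t ht x) ∂ν := by
        simp [jumpProbability]
    _ = 1 - ∫ x, jumpProbability t ht x ∂ν := by
        rw [integral_sub (integrable_const 1) ((jumpProbability t ht).integrable ν)]
        simp

lemma one_sub_intervalIntegral_survival_sub {μ0 : ℝ → Measure ℝ≥0}
    (hμ0 : ∀ z, IsProbabilityMeasure (μ0 z))
    (hμ0meas : AEMeasurable fun z => ∫ x, jumpProbability t ht x ∂μ0 z) (y : ℝ) :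
    (1 - ∫ z in y..1, ∫ x, rexp (-(x : ℝ) * t) ∂μ0 z) - y
      = ∫ z in y..1, ∫ x, jumpProbability t ht x ∂μ0 z := by
  simp_rw [integral_exp_neg_mul_eq_one_sub t ht]
  rw [intervalIntegral.integral_sub intervalIntegrable_const (intervalIntegrable_of_abs_le
    hμ0meas (fun z => abs_integral_jumpProbability_le_one t ht _) y 1),
    intervalIntegral.integral_const, smul_eq_mul, mul_one]
  ring

end JumpProbability

lemma integral_profile_sub_empirical_sq_le {Ω : Type*} [MeasurableSpace Ω] {P : Measure Ω}
    [IsProbabilityMeasure P] {N : ℕ} (hN : 0 < N) {w : Fin N → ℝ≥0} {τ : Fin N → Ω → ℝ}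
    (hτm : ∀ i, Measurable (τ i)) (hτ : iIndepFun τ P) {t : ℝ} (ht : 0 ≤ t)
    (hτdist : ∀ i, P {ω | τ i ω ≤ t} = ENNReal.ofReal (1 - rexp (-(w i : ℝ) * t)))
    {x0 : Fin N → ℕ} (hx0 : ∀ k ∈ Finset.Icc 1 N, ∃! i, x0 i = k) {y0 : Fin N → ℝ}
    (hy0 : ∀ i, y0 i = ((x0 i : ℝ) - 1) / N) {μ0 : ℝ → Measure ℝ≥0}
    (hμ0 : ∀ z, IsProbabilityMeasure (μ0 z))
    (hμ0meas : AEMeasurable fun z => ∫ x, jumpProbability t ht x ∂μ0 z) {ε : ℝ}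
    (hε : ∀ y ∈ Ico (0 : ℝ) 1,
      |(N : ℝ)⁻¹ * ∑ i, jumpProbability t ht (w i) * (if y0 i ≤ y then 1 else 0)
        - ∫ z in (0 : ℝ)..y, ∫ x, jumpProbability t ht x ∂μ0 z| ≤ ε)
    {y : ℝ} (hy : y ∈ Ico (0 : ℝ) 1) :
    ∫ ω, ((1 - ∫ z in y..1, ∫ x, rexp (-(x : ℝ) * t) ∂μ0 z)
        - (y + (N : ℝ)⁻¹ * ∑ i, (if τ i ω ≤ t then (1 : ℝ) else 0)
          * (if y ≤ y0 i then (1 : ℝ) else 0))) ^ 2 ∂P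
      ≤ (2 * ε + 2 / N) ^ 2 + (N : ℝ)⁻¹ / 4 := by
  have hmean : ∀ i, P.real {ω | τ i ω ≤ t} = jumpProbability t ht (w i) := fun i => by
    rw [measureReal_def, hτdist i]
    exact ENNReal.toReal_ofReal (jumpProbability_nonneg t ht _)
  have hbias := abs_integral_sub_average_tail_le hN hx0 hy0
    (fun i => abs_jumpProbability_le_one t ht (w i)) hμ0meas
    (fun z => abs_integral_jumpProbability_le_one t ht (μ0 z)) hε hy
  have hvar := integral_const_sub_average_jumps_sq_le hτm hτ t
    (c := fun i => if y ≤ y0 i then 1 else 0) (fun i => by split_ifs <;> simp)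
    ((1 - ∫ z in y..1, ∫ x, rexp (-(x : ℝ) * t) ∂μ0 z) - y)
  simp only [Fintype.card_fin, hmean, one_sub_intervalIntegral_survival_sub t ht hμ0 hμ0meas]
    at hvar
  simp_rw [sub_add_eq_sub_sub, one_sub_intervalIntegral_survival_sub t ht hμ0 hμ0meas]
  refine hvar.trans (add_le_add_left ?_ _)
  exact sq_le_sq' (abs_le.1 hbias).1 (abs_le.1 hbias).2

theorem stmt12_general
    (Ω : Type) [MeasureSpace Ω] [IsProbabilityMeasure (ℙ : Measure Ω)]
    (w : (N : ℕ) → Fin N → ℝ≥0)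
    (τ : (N : ℕ) → Fin N → Ω → ℝ)
    (hτmeas : ∀ N i, Measurable (τ N i))
    (hτindep : ∀ N, iIndepFun (τ N) ℙ)
    (hτdist : ∀ N i (t : ℝ), 0 ≤ t →
      (ℙ : Measure Ω) {ω | τ N i ω ≤ t} = ENNReal.ofReal (1 - rexp (-(w N i : ℝ) * t)))
    (x0 : (N : ℕ) → Fin N → ℕ)
    (hx0 : ∀ N, ∀ k ∈ Finset.Icc 1 N, ∃! i : Fin N, x0 N i = k)
    (y0 : (N : ℕ) → Fin N → ℝ)
    (hy0 : ∀ N i, y0 N i = ((x0 N i : ℝ) - 1) / N)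
    (μ0 : ℝ → Measure ℝ≥0) (hμ0 : ∀ z, IsProbabilityMeasure (μ0 z))
    (hμ0meas : ∀ g : ℝ≥0 →ᵇ ℝ, AEMeasurable (fun z => ∫ x, g x ∂(μ0 z)) volume)
    (hinit : ∀ g : ℝ≥0 →ᵇ ℝ,
      Tendsto (fun N : ℕ => ⨆ y : Ico (0 : ℝ) 1,
        |(N : ℝ)⁻¹ * (∑ i : Fin N, g (w N i) * (if y0 N i ≤ (y : ℝ) then (1 : ℝ) else 0))
          - ∫ z in (0 : ℝ)..(y : ℝ), ∫ x, g x ∂(μ0 z)|) atTop (𝓝 0))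
    (t : ℝ) (ht : 0 ≤ t) :
    Tendsto (fun N : ℕ => ⨆ y : Ico (0 : ℝ) 1,
      ∫ ω, ((1 - ∫ z in (y : ℝ)..1, ∫ x, rexp (-(x : ℝ) * t) ∂(μ0 z))
          - ((y : ℝ) + (N : ℝ)⁻¹ * ∑ i : Fin N,
              (if τ N i ω ≤ t then (1 : ℝ) else 0)
                * (if (y : ℝ) ≤ y0 N i then (1 : ℝ) else 0))) ^ 2 ∂(ℙ : Measure Ω))
      atTop (𝓝 0) := by
  set p := jumpProbability t ht
  set D : ℕ → ℝ := fun N => ⨆ y : Ico (0 : ℝ) 1,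
    |(N : ℝ)⁻¹ * (∑ i : Fin N, p (w N i) * (if y0 N i ≤ (y : ℝ) then (1 : ℝ) else 0))
      - ∫ z in (0 : ℝ)..(y : ℝ), ∫ x, p x ∂μ0 z|
  have hD_le : ∀ N : ℕ, ∀ y ∈ Ico (0 : ℝ) 1,
      |(N : ℝ)⁻¹ * (∑ i : Fin N, p (w N i) * (if y0 N i ≤ y then (1 : ℝ) else 0))
        - ∫ z in (0 : ℝ)..y, ∫ x, p x ∂μ0 z| ≤ D N := fun N y hy =>
    le_ciSup (bddAbove_range_abs_average_sub_integral (fun i => abs_jumpProbability_le_one t ht _)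
      fun z => abs_integral_jumpProbability_le_one t ht (μ0 z)) (⟨y, hy⟩ : Ico (0 : ℝ) 1)
  refine squeeze_zero'
    (Eventually.of_forall fun N => Real.iSup_nonneg fun y => integral_nonneg fun ω => sq_nonneg _)
    ((eventually_gt_atTop 0).mono fun N hN => Real.iSup_le (fun y =>
      integral_profile_sub_empirical_sq_le hN (hτmeas N) (hτindep N) ht (fun i => hτdist N i t ht)
        (hx0 N) (hy0 N) hμ0 (hμ0meas p) (hD_le N) y.2) (by positivity)) ?_
  have hbias : Tendsto (fun N : ℕ => 2 * D N + 2 / (N : ℝ)) atTop (𝓝 0) := by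
    have hD : Tendsto D atTop (𝓝 0) := hinit p
    simpa using (hD.const_mul 2).add (tendsto_const_div_atTop_nhds_zero_nat 2)
  simpa using (hbias.pow 2).add (tendsto_inv_atTop_nhds_zero_nat.div_const 4)

/-- `y_C^{(N)}(y,t)` converges to `y_C(y,t)` in `L²`, uniformly in
`y ∈ [0,1)`: `lim_N sup_y E[(y_C(y,t) - y_C^{(N)}(y,t))²] = 0`. -/
theorem stmt12
    (Ω : Type) [MeasureSpace Ω] [IsProbabilityMeasure (ℙ : Measure Ω)]
    (w : (N : ℕ) → Fin N → ℝ≥0) (hw : ∀ N i, 0 < w N i)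
    (τ : (N : ℕ) → Fin N → Ω → ℝ)
    (hτmeas : ∀ N i, Measurable (τ N i))
    (hτindep : ∀ N, iIndepFun (τ N) ℙ)
    (hτdist : ∀ N i (t : ℝ), 0 ≤ t →
      (ℙ : Measure Ω) {ω | τ N i ω ≤ t} = ENNReal.ofReal (1 - rexp (-(w N i : ℝ) * t)))
    (x0 : (N : ℕ) → Fin N → ℕ)
    (hx0 : ∀ N, ∀ k ∈ Finset.Icc 1 N, ∃! i : Fin N, x0 N i = k)
    (y0 : (N : ℕ) → Fin N → ℝ)
    (hy0 : ∀ N i, y0 N i = ((x0 N i : ℝ) - 1) / N)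
    (μ0 : ℝ → Measure ℝ≥0) (hμ0 : ∀ z, IsProbabilityMeasure (μ0 z))
    (hμ0meas : ∀ g : ℝ≥0 →ᵇ ℝ, AEMeasurable (fun z => ∫ x, g x ∂(μ0 z)) volume)
    (hinit : ∀ g : ℝ≥0 →ᵇ ℝ,
      Tendsto (fun N : ℕ => ⨆ y : Ico (0 : ℝ) 1,
        |(N : ℝ)⁻¹ * (∑ i : Fin N, g (w N i) * (if y0 N i ≤ (y : ℝ) then (1 : ℝ) else 0))
          - ∫ z in (0 : ℝ)..(y : ℝ), ∫ x, g x ∂(μ0 z)|) atTop (𝓝 0))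
    (t : ℝ) (ht : 0 ≤ t) :
    Tendsto (fun N : ℕ => ⨆ y : Ico (0 : ℝ) 1,
      ∫ ω, ((1 - ∫ z in (y : ℝ)..1, ∫ x, rexp (-(x : ℝ) * t) ∂(μ0 z))
          - ((y : ℝ) + (N : ℝ)⁻¹ * ∑ i : Fin N,
              (if τ N i ω ≤ t then (1 : ℝ) else 0)
                * (if (y : ℝ) ≤ y0 N i then (1 : ℝ) else 0))) ^ 2 ∂(ℙ : Measure Ω))
      atTop (𝓝 0) :=
  stmt12_general Ω w τ hτmeas hτindep hτdist x0 hx0 y0 hy0 μ0 hμ0 hμ0meas hinit t ht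
end
end

section
/- For every a ∈ [0,1), every t ≥ 0 and every bounded continuous g : [0,∞) → ℝ, the random variable (1/N) Σ_{i=1}^N g(w_i^{(N)}) χ_{y_{i,0}^{(N)} ≥ a} χ_{τ_i^{(N)} > t} converges in probability, as N → ∞, to ∫_a^1 ∫_{[0,∞)} g(w) e^{−wt} μ_{z,0}(dw) dz. -/
/-!
With `G(w) = g(w) e^{-wt}`, the random average has mean `(1/N) Σ G(w_i) χ_{a ≤ y_i}`, since
`P(τ_i > t) = e^{-w_i t}`. The `y_i` are the distinct grid points `0, 1/N, …, 1 - 1/N`, so this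
mean is `F_N(1 - 1/N) - F_N(a)` up to a single summand, where `F_N` is the `G`-weighted empirical
distribution function; the uniform convergence of `F_N` (the hypothesis applied to `G`) makes the
mean converge to `∫_a^1 ∫ G dμ_z dz`. The summands are independent and bounded by `‖g‖`, so by
Chebyshev the average leaves an `ε`-neighbourhood of its mean with probability `O(1/(N ε²))`.
-/

open MeasureTheory ProbabilityTheory Filter Topology Real Set NNReal BoundedContinuousFunction

noncomputable section

lemma mem_Icc_and_injective_of_existsUnique {N : ℕ} {x : Fin N → ℕ}
    (hx : ∀ k ∈ Finset.Icc 1 N, ∃! i, x i = k) :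
    (∀ i, x i ∈ Finset.Icc 1 N) ∧ Function.Injective x := by
  let f : Finset.Icc 1 N → Fin N := fun k => (hx k k.2).exists.choose
  have hxf : ∀ k, x (f k) = k := fun k => (hx k k.2).exists.choose_spec
  have hf : Function.Bijective f := by
    refine (Fintype.bijective_iff_injective_and_card f).mpr
      ⟨fun k k' hkk' => Subtype.ext ?_, by simp⟩
    rw [← hxf k, ← hxf k', hkk']
  refine ⟨fun i => ?_, fun i j hij => ?_⟩
  · obtain ⟨k, rfl⟩ := hf.2 i
    exact hxf k ▸ k.2
  · obtain ⟨k, rfl⟩ := hf.2 i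
    obtain ⟨k', rfl⟩ := hf.2 j
    rw [hxf, hxf] at hij
    rw [Subtype.ext hij]

lemma div_sub_one_le_and_injective {N : ℕ} {x : Fin N → ℕ}
    (hx : ∀ k ∈ Finset.Icc 1 N, ∃! i, x i = k) :
    (∀ i, ((x i : ℝ) - 1) / N ≤ 1 - (N : ℝ)⁻¹) ∧
      Function.Injective fun i => ((x i : ℝ) - 1) / N := by
  obtain ⟨hmem, hinj⟩ := mem_Icc_and_injective_of_existsUnique hx
  refine ⟨fun i => ?_, fun i j hij => hinj ?_⟩
  · have hN : (0 : ℝ) < N := by exact_mod_cast i.pos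
    have hxN : (x i : ℝ) ≤ N := by exact_mod_cast (Finset.mem_Icc.mp (hmem i)).2
    rw [div_le_iff₀ hN, sub_mul, inv_mul_cancel₀ hN.ne']
    linarith
  · have hN : (N : ℝ) ≠ 0 := by exact_mod_cast i.pos.ne'
    simpa [div_left_inj' hN] using hij

def weightedCDF {N : ℕ} (h y : Fin N → ℝ) (s : ℝ) : ℝ :=
  (N : ℝ)⁻¹ * ∑ i, h i * if y i ≤ s then 1 else 0

section WeightedCDF

variable {N : ℕ} {h y : Fin N → ℝ} {B : ℝ}

lemma abs_weightedCDF_le (hh : ∀ i, |h i| ≤ B) (hB : 0 ≤ B) (s : ℝ) :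
    |weightedCDF h y s| ≤ B := by
  rcases N.eq_zero_or_pos with rfl | hN
  · simpa [weightedCDF] using hB
  have hN' : (0 : ℝ) < N := by exact_mod_cast hN
  have hsum : |∑ i, h i * if y i ≤ s then 1 else 0| ≤ N * B :=
    calc |∑ i, h i * if y i ≤ s then 1 else 0|
        ≤ ∑ i, |h i * if y i ≤ s then 1 else 0| := Finset.abs_sum_le_sum_abs _ _
      _ ≤ ∑ _i : Fin N, B := Finset.sum_le_sum fun i _ => by
          split_ifs <;> simp [hh i, hB]
      _ = N * B := by simp
  rw [weightedCDF, abs_mul, abs_inv, Nat.abs_cast, inv_mul_le_iff₀ hN']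
  exact hsum

lemma inv_mul_sum_indicator_ge_eq {b : ℝ} (hy : ∀ i, y i ≤ b) (a : ℝ) :
    (N : ℝ)⁻¹ * ∑ i, h i * (if a ≤ y i then 1 else 0) =
      weightedCDF h y b - weightedCDF h y a + (N : ℝ)⁻¹ * ∑ i, h i * if y i = a then 1 else 0 := by
  simp only [weightedCDF, ← mul_sub, ← mul_add, ← Finset.sum_sub_distrib,
    ← Finset.sum_add_distrib]
  congr 1
  refine Finset.sum_congr rfl fun i _ => ?_
  rw [if_pos (hy i)]
  split_ifs <;> grind

lemma abs_sum_mul_indicator_eq_le (hy : Function.Injective y) (hh : ∀ i, |h i| ≤ B)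
    (hB : 0 ≤ B) (a : ℝ) : |∑ i, h i * if y i = a then 1 else 0| ≤ B := by
  by_cases hex : ∃ i, y i = a
  · obtain ⟨i, hi⟩ := hex
    rw [Finset.sum_eq_single i (fun j _ hji => by rw [if_neg fun hj => hji (hy (hj.trans hi.symm)),
      mul_zero]) (by simp)]
    simpa [hi] using hh i
  · rw [not_exists] at hex
    simpa [hex] using hB


lemma abs_weightedCDF_sub_le_iSup {φ : ℝ → ℝ}
    (hh : ∀ i, |h i| ≤ B) (hφ : ∀ z, |φ z| ≤ B) {s : ℝ} (hs : s ∈ Ico (0 : ℝ) 1) :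
    |weightedCDF h y s - ∫ z in 0..s, φ z| ≤
      ⨆ r : Ico (0 : ℝ) 1, |weightedCDF h y r - ∫ z in 0..(r : ℝ), φ z| := by
  have hB : 0 ≤ B := (abs_nonneg _).trans (hφ 0)
  refine le_ciSup (f := fun r : Ico (0 : ℝ) 1 => |weightedCDF h y r - ∫ z in 0..(r : ℝ), φ z|)
    ⟨2 * B, ?_⟩ ⟨s, hs⟩
  rintro _ ⟨⟨r, hr0, hr1⟩, rfl⟩
  have hint : ‖∫ z in 0..r, φ z‖ ≤ B * |r - 0| :=
    intervalIntegral.norm_integral_le_of_norm_le_const fun z _ => hφ z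
  rw [Real.norm_eq_abs, sub_zero, abs_of_nonneg hr0] at hint
  have hF := abs_weightedCDF_le (y := y) hh hB r
  calc |weightedCDF h y r - ∫ z in 0..r, φ z|
      ≤ |weightedCDF h y r| + |∫ z in 0..r, φ z| := abs_sub _ _
    _ ≤ 2 * B := by nlinarith

end WeightedCDF

theorem tendsto_inv_mul_sum_indicator_ge {h y : (N : ℕ) → Fin N → ℝ} {φ : ℝ → ℝ} {B : ℝ}
    (hh : ∀ N i, |h N i| ≤ B) (hφ : ∀ z, |φ z| ≤ B)
    (hφi : ∀ u v, IntervalIntegrable φ volume u v)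
    (hy : ∀ N i, y N i ≤ 1 - (N : ℝ)⁻¹) (hy_inj : ∀ N, Function.Injective (y N))
    (hcdf : Tendsto (fun N : ℕ => ⨆ s : Ico (0 : ℝ) 1,
      |weightedCDF (h N) (y N) s - ∫ z in 0..(s : ℝ), φ z|) atTop (𝓝 0))
    {a : ℝ} (ha : a ∈ Ico (0 : ℝ) 1) :
    Tendsto (fun N : ℕ => (N : ℝ)⁻¹ * ∑ i, h N i * if a ≤ y N i then 1 else 0) atTop
      (𝓝 (∫ z in a..1, φ z)) := by
  have hB : 0 ≤ B := (abs_nonneg _).trans (hφ 0)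
  set Δ := fun N : ℕ => ⨆ s : Ico (0 : ℝ) 1, |weightedCDF (h N) (y N) s - ∫ z in 0..(s : ℝ), φ z|
  have key : ∀ N : ℕ, 1 ≤ N → |(N : ℝ)⁻¹ * (∑ i, h N i * if a ≤ y N i then 1 else 0) -
      ∫ z in a..1, φ z| ≤ 2 * Δ N + 2 * B * (N : ℝ)⁻¹ := by
    intro N hN
    have hN' : (1 : ℝ) ≤ N := by exact_mod_cast hN
    have hN_inv : (0 : ℝ) < (N : ℝ)⁻¹ := inv_pos.mpr (by linarith)
    set b : ℝ := 1 - (N : ℝ)⁻¹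
    have hb : b ∈ Ico (0 : ℝ) 1 :=
      ⟨sub_nonneg.mpr (inv_le_one_of_one_le₀ hN'), sub_lt_self _ hN_inv⟩
    have hL : ∫ z in a..1, φ z = (∫ z in 0..b, φ z) - (∫ z in 0..a, φ z) + ∫ z in b..1, φ z := by
      rw [intervalIntegral.integral_interval_sub_left (hφi 0 b) (hφi 0 a),
        intervalIntegral.integral_add_adjacent_intervals (hφi a b) (hφi b 1)]
    have e_b : |weightedCDF (h N) (y N) b - ∫ z in 0..b, φ z| ≤ Δ N :=
      abs_weightedCDF_sub_le_iSup (hh N) hφ hb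
    have e_a : |weightedCDF (h N) (y N) a - ∫ z in 0..a, φ z| ≤ Δ N :=
      abs_weightedCDF_sub_le_iSup (hh N) hφ ha
    have e_atom : |(N : ℝ)⁻¹ * ∑ i, h N i * if y N i = a then 1 else 0| ≤ (N : ℝ)⁻¹ * B := by
      rw [abs_mul, abs_of_pos hN_inv]
      exact mul_le_mul_of_nonneg_left (abs_sum_mul_indicator_eq_le (hy_inj N) (hh N) hB a)
        hN_inv.le
    have e_tail : ‖∫ z in b..1, φ z‖ ≤ B * |1 - b| :=
      intervalIntegral.norm_integral_le_of_norm_le_const fun z _ => hφ z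
    rw [Real.norm_eq_abs, show 1 - b = (N : ℝ)⁻¹ by ring, abs_of_pos hN_inv] at e_tail
    rw [inv_mul_sum_indicator_ge_eq (b := b) (hy N) a, hL]
    obtain ⟨hb₁, hb₂⟩ := abs_le.mp e_b
    obtain ⟨ha₁, ha₂⟩ := abs_le.mp e_a
    obtain ⟨h₁, h₂⟩ := abs_le.mp e_atom
    obtain ⟨ht₁, ht₂⟩ := abs_le.mp e_tail
    exact abs_le.mpr ⟨by linarith, by linarith⟩
  have hbound : Tendsto (fun N : ℕ => 2 * Δ N + 2 * B * (N : ℝ)⁻¹) atTop (𝓝 0) := by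
    simpa using (hcdf.const_mul 2).add (tendsto_inv_atTop_nhds_zero_nat.const_mul (2 * B))
  rw [tendsto_iff_norm_sub_tendsto_zero]
  exact squeeze_zero_norm' (eventually_atTop.mpr ⟨1, fun N hN => by simpa using key N hN⟩) hbound

theorem tendsto_inv_mul_sum_bcf_indicator_ge {w : (N : ℕ) → Fin N → ℝ≥0}
    {x0 : (N : ℕ) → Fin N → ℕ} (hx0 : ∀ N, ∀ k ∈ Finset.Icc 1 N, ∃! i : Fin N, x0 N i = k)
    {y0 : (N : ℕ) → Fin N → ℝ} (hy0 : ∀ N i, y0 N i = ((x0 N i : ℝ) - 1) / N)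
    {μ0 : ℝ → Measure ℝ≥0} [∀ z, IsProbabilityMeasure (μ0 z)] (G : ℝ≥0 →ᵇ ℝ)
    (hG : AEMeasurable (fun z => ∫ x, G x ∂(μ0 z)) volume)
    (hcdf : Tendsto (fun N : ℕ => ⨆ s : Ico (0 : ℝ) 1,
      |weightedCDF (fun i => G (w N i)) (y0 N) s - ∫ z in 0..(s : ℝ), ∫ x, G x ∂(μ0 z)|)
      atTop (𝓝 0))
    {a : ℝ} (ha : a ∈ Ico (0 : ℝ) 1) :
    Tendsto (fun N : ℕ => (N : ℝ)⁻¹ * ∑ i, G (w N i) * if a ≤ y0 N i then 1 else 0) atTop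
      (𝓝 (∫ z in a..1, ∫ x, G x ∂(μ0 z))) := by
  have hφ : ∀ z, |∫ x, G x ∂(μ0 z)| ≤ ‖G‖ := fun z => G.norm_integral_le_norm (μ := μ0 z)
  have hφi : ∀ u v, IntervalIntegrable (fun z => ∫ x, G x ∂(μ0 z)) volume u v := fun u v =>
    (intervalIntegrable_const (c := ‖G‖)).mono_fun hG.aestronglyMeasurable.restrict
      (ae_of_all _ fun z => by simpa using hφ z)
  have hy0_eq : ∀ N, y0 N = fun i => ((x0 N i : ℝ) - 1) / N := fun N => funext (hy0 N)
  exact tendsto_inv_mul_sum_indicator_ge (fun N i => G.norm_coe_le_norm _) hφ hφi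
    (fun N => hy0_eq N ▸ (div_sub_one_le_and_injective (hx0 N)).1)
    (fun N => hy0_eq N ▸ (div_sub_one_le_and_injective (hx0 N)).2) hcdf ha

section Probability

variable {Ω : Type*} [MeasurableSpace Ω] {μ : Measure Ω}

lemma integral_indicator_lt_eq_of_measure_le [IsProbabilityMeasure μ] {τ : Ω → ℝ}
    (hτ : Measurable τ) {t p : ℝ} (hp : p ≤ 1)
    (hcdf : μ {ω | τ ω ≤ t} = ENNReal.ofReal (1 - p)) :
    ∫ ω, (if t < τ ω then (1 : ℝ) else 0) ∂μ = p := by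
  have hset : {ω | t < τ ω} = {ω | τ ω ≤ t}ᶜ := by ext; simp
  have hind : (fun ω => if t < τ ω then (1 : ℝ) else 0) = {ω | t < τ ω}.indicator 1 := by
    ext; simp [Set.indicator_apply]
  rw [hind, integral_indicator_one (measurableSet_lt measurable_const hτ), hset,
    probReal_compl_eq_one_sub (measurableSet_le hτ measurable_const), measureReal_def, hcdf,
    ENNReal.toReal_ofReal (sub_nonneg.mpr hp)]
  ring

lemma variance_inv_mul_sum_le [IsProbabilityMeasure μ] {N : ℕ} {X : Fin N → Ω → ℝ}
    (hX : ∀ i, Measurable (X i)) (hind : iIndepFun X μ) {C : ℝ} (hC : ∀ i ω, |X i ω| ≤ C) :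
    variance (fun ω => (N : ℝ)⁻¹ * ∑ i, X i ω) μ ≤ C ^ 2 / N := by
  have hXL2 : ∀ i, MemLp (X i) 2 μ := fun i =>
    MemLp.of_bound (hX i).aestronglyMeasurable C (ae_of_all _ fun ω => hC i ω)
  have hvar : ∀ i, variance (X i) μ ≤ C ^ 2 := fun i => by
    simpa using variance_le_sq_of_bounded (a := -C) (b := C)
      (ae_of_all _ fun ω => abs_le.mp (hC i ω)) (hX i).aemeasurable
  have hsum : variance (∑ i, X i) μ = ∑ i, variance (X i) μ :=
    IndepFun.variance_sum (fun i _ => hXL2 i) fun i _ j _ hij => hind.indepFun hij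
  calc variance (fun ω => (N : ℝ)⁻¹ * ∑ i, X i ω) μ
      = ((N : ℝ)⁻¹) ^ 2 * ∑ i, variance (X i) μ := by
        rw [variance_const_mul, ← Finset.sum_fn, hsum]
    _ ≤ ((N : ℝ)⁻¹) ^ 2 * (N * C ^ 2) := by
        gcongr
        simpa using Finset.sum_le_sum fun i (_ : i ∈ Finset.univ) => hvar i
    _ = C ^ 2 / N := by
        rcases N.eq_zero_or_pos with rfl | hN
        · simp
        · field_simp

lemma measure_le_abs_inv_mul_sum_sub_le [IsProbabilityMeasure μ] {N : ℕ}
    {X : Fin N → Ω → ℝ} (hX : ∀ i, Measurable (X i)) (hind : iIndepFun X μ) {C : ℝ}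
    (hC : ∀ i ω, |X i ω| ≤ C) {ε : ℝ} (hε : 0 < ε) :
    μ {ω | ε ≤ |(N : ℝ)⁻¹ * ∑ i, X i ω - (N : ℝ)⁻¹ * ∑ i, μ[X i]|} ≤
      ENNReal.ofReal (C ^ 2 / N / ε ^ 2) := by
  have hXL2 : ∀ i, MemLp (X i) 2 μ := fun i =>
    MemLp.of_bound (hX i).aestronglyMeasurable C (ae_of_all _ fun ω => hC i ω)
  have hmean : μ[fun ω => (N : ℝ)⁻¹ * ∑ i, X i ω] = (N : ℝ)⁻¹ * ∑ i, μ[X i] := by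
    rw [integral_const_mul, integral_finsetSum _ fun i _ => (hXL2 i).integrable one_le_two]
  have hcheb := meas_ge_le_variance_div_sq
    ((memLp_finsetSum Finset.univ fun i _ => hXL2 i).const_mul (N : ℝ)⁻¹) hε
  rw [hmean] at hcheb
  refine hcheb.trans (ENNReal.ofReal_le_ofReal ?_)
  gcongr
  exact variance_inv_mul_sum_le hX hind hC

theorem tendsto_measure_le_abs_inv_mul_sum_sub [IsProbabilityMeasure μ]
    {X : (N : ℕ) → Fin N → Ω → ℝ} (hX : ∀ N i, Measurable (X N i))
    (hind : ∀ N, iIndepFun (X N) μ) {C : ℝ} (hC : ∀ N i ω, |X N i ω| ≤ C) {ε : ℝ} (hε : 0 < ε) :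
    Tendsto (fun N : ℕ => μ {ω | ε ≤ |(N : ℝ)⁻¹ * ∑ i, X N i ω - (N : ℝ)⁻¹ * ∑ i, μ[X N i]|})
      atTop (𝓝 0) := by
  have hbound : Tendsto (fun N : ℕ => ENNReal.ofReal (C ^ 2 / N / ε ^ 2)) atTop (𝓝 0) := by
    simpa using ENNReal.tendsto_ofReal
      (((tendsto_const_div_atTop_nhds_zero_nat (C ^ 2)).div_const (ε ^ 2)))
  exact tendsto_of_tendsto_of_tendsto_of_le_of_le tendsto_const_nhds hbound (fun _ => bot_le)
    fun N => measure_le_abs_inv_mul_sum_sub_le (hX N) (hind N) (hC N) hε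

lemma tendsto_measure_le_abs_sub_of_tendsto {S : ℕ → Ω → ℝ} {m : ℕ → ℝ} {L : ℝ}
    (hm : Tendsto m atTop (𝓝 L)) {ε : ℝ} (hε : 0 < ε)
    (hS : Tendsto (fun N => μ {ω | ε / 2 ≤ |S N ω - m N|}) atTop (𝓝 0)) :
    Tendsto (fun N => μ {ω | ε ≤ |S N ω - L|}) atTop (𝓝 0) := by
  have hclose : ∀ᶠ N in atTop, |m N - L| < ε / 2 := by
    simpa [Real.dist_eq] using (Metric.tendsto_nhds.mp hm) (ε / 2) (half_pos hε)
  refine tendsto_of_tendsto_of_tendsto_of_le_of_le' tendsto_const_nhds hS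
    (Eventually.of_forall fun _ => bot_le) ?_
  filter_upwards [hclose] with N hN
  refine measure_mono fun ω (hω : ε ≤ |S N ω - L|) => ?_
  show ε / 2 ≤ |S N ω - m N|
  linarith [abs_sub_le (S N ω) (m N) L]

end Probability

lemma exp_neg_mul_le_one (w : ℝ≥0) {t : ℝ} (ht : 0 ≤ t) : rexp (-(w : ℝ) * t) ≤ 1 := by
  rw [exp_le_one_iff, neg_mul, neg_nonpos]
  exact mul_nonneg w.coe_nonneg ht

def expDecay (t : ℝ) (ht : 0 ≤ t) : ℝ≥0 →ᵇ ℝ :=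
  ofNormedAddCommGroup (fun w : ℝ≥0 => rexp (-(w : ℝ) * t)) (by fun_prop) 1 fun w => by
    rw [Real.norm_eq_abs, abs_of_pos (exp_pos _)]
    exact exp_neg_mul_le_one w ht

theorem stmt13_general
    (Ω : Type) [MeasureSpace Ω] [IsProbabilityMeasure (ℙ : Measure Ω)]
    (w : (N : ℕ) → Fin N → ℝ≥0)
    (τ : (N : ℕ) → Fin N → Ω → ℝ)
    (hτmeas : ∀ N i, Measurable (τ N i))
    (hτindep : ∀ N, iIndepFun (τ N) ℙ)
    (hτdist : ∀ N i (t : ℝ), 0 ≤ t →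
      (ℙ : Measure Ω) {ω | τ N i ω ≤ t} = ENNReal.ofReal (1 - rexp (-(w N i : ℝ) * t)))
    (x0 : (N : ℕ) → Fin N → ℕ)
    (hx0 : ∀ N, ∀ k ∈ Finset.Icc 1 N, ∃! i : Fin N, x0 N i = k)
    (y0 : (N : ℕ) → Fin N → ℝ)
    (hy0 : ∀ N i, y0 N i = ((x0 N i : ℝ) - 1) / N)
    (μ0 : ℝ → Measure ℝ≥0) (hμ0 : ∀ z, IsProbabilityMeasure (μ0 z))
    (hμ0meas : ∀ g : ℝ≥0 →ᵇ ℝ, AEMeasurable (fun z => ∫ x, g x ∂(μ0 z)) volume)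
    (hinit : ∀ g : ℝ≥0 →ᵇ ℝ,
      Tendsto (fun N : ℕ => ⨆ y : Ico (0 : ℝ) 1,
        |(N : ℝ)⁻¹ * (∑ i : Fin N, g (w N i) * (if y0 N i ≤ (y : ℝ) then (1 : ℝ) else 0))
          - ∫ z in (0 : ℝ)..(y : ℝ), ∫ x, g x ∂(μ0 z)|) atTop (𝓝 0))
    (a : ℝ) (ha : a ∈ Ico (0 : ℝ) 1) (t : ℝ) (ht : 0 ≤ t) (g : ℝ≥0 →ᵇ ℝ) :
    ∀ ε > (0 : ℝ), Tendsto
      (fun N : ℕ => (ℙ : Measure Ω)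
        {ω | ε ≤ |(N : ℝ)⁻¹ * (∑ i : Fin N, g (w N i)
              * (if a ≤ y0 N i then (1 : ℝ) else 0) * (if t < τ N i ω then (1 : ℝ) else 0))
            - ∫ z in a..1, ∫ x, g x * rexp (-(x : ℝ) * t) ∂(μ0 z)|})
      atTop (𝓝 0) := by
  intro ε hε
  set G := g * expDecay t ht
  have hmean := tendsto_inv_mul_sum_bcf_indicator_ge hx0 hy0 G (hμ0meas G) (hinit G) ha
  set c : (N : ℕ) → Fin N → ℝ := fun N i => g (w N i) * if a ≤ y0 N i then 1 else 0
  have hsurv : ∀ N i, Measurable fun s : ℝ => c N i * if t < s then 1 else 0 := fun N i =>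
    (Measurable.ite (measurableSet_lt measurable_const measurable_id) measurable_const
      measurable_const).const_mul _
  have hbound : ∀ N i ω, |c N i * if t < τ N i ω then 1 else 0| ≤ ‖g‖ := fun N i ω => by
    have hg : |g (w N i)| ≤ ‖g‖ := g.norm_coe_le_norm (w N i)
    simp only [c]
    split_ifs <;> simp [hg]
  have hsurv_mean : ∀ N i, ∫ ω, (c N i * if t < τ N i ω then 1 else 0) ∂ℙ =
      G (w N i) * if a ≤ y0 N i then 1 else 0 := fun N i => by
    rw [integral_const_mul, integral_indicator_lt_eq_of_measure_le (hτmeas N i)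
      (exp_neg_mul_le_one (w N i) ht) (hτdist N i t ht),
      show G (w N i) = g (w N i) * rexp (-(w N i : ℝ) * t) from rfl]
    ring
  have hLLN := tendsto_measure_le_abs_inv_mul_sum_sub
    (X := fun N i ω => c N i * if t < τ N i ω then 1 else 0)
    (fun N i => (hsurv N i).comp (hτmeas N i)) (fun N => (hτindep N).comp _ (hsurv N)) hbound
    (half_pos hε)
  simp only [hsurv_mean] at hLLN
  exact tendsto_measure_le_abs_sub_of_tendsto hmean hε hLLN

/-- `(1/N) Σ g(w_i) χ_{y_{i,0} ≥ a} χ_{τ_i > t}` converges in probability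
to `∫_a^1 ∫ g(w) e^{-wt} μ_{z,0}(dw) dz`. -/
theorem stmt13
    (Ω : Type) [MeasureSpace Ω] [IsProbabilityMeasure (ℙ : Measure Ω)]
    (w : (N : ℕ) → Fin N → ℝ≥0) (hw : ∀ N i, 0 < w N i)
    (τ : (N : ℕ) → Fin N → Ω → ℝ)
    (hτmeas : ∀ N i, Measurable (τ N i))
    (hτindep : ∀ N, iIndepFun (τ N) ℙ)
    (hτdist : ∀ N i (t : ℝ), 0 ≤ t →
      (ℙ : Measure Ω) {ω | τ N i ω ≤ t} = ENNReal.ofReal (1 - rexp (-(w N i : ℝ) * t)))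
    (x0 : (N : ℕ) → Fin N → ℕ)
    (hx0 : ∀ N, ∀ k ∈ Finset.Icc 1 N, ∃! i : Fin N, x0 N i = k)
    (y0 : (N : ℕ) → Fin N → ℝ)
    (hy0 : ∀ N i, y0 N i = ((x0 N i : ℝ) - 1) / N)
    (μ0 : ℝ → Measure ℝ≥0) (hμ0 : ∀ z, IsProbabilityMeasure (μ0 z))
    (hμ0meas : ∀ g : ℝ≥0 →ᵇ ℝ, AEMeasurable (fun z => ∫ x, g x ∂(μ0 z)) volume)
    (hinit : ∀ g : ℝ≥0 →ᵇ ℝ,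
      Tendsto (fun N : ℕ => ⨆ y : Ico (0 : ℝ) 1,
        |(N : ℝ)⁻¹ * (∑ i : Fin N, g (w N i) * (if y0 N i ≤ (y : ℝ) then (1 : ℝ) else 0))
          - ∫ z in (0 : ℝ)..(y : ℝ), ∫ x, g x ∂(μ0 z)|) atTop (𝓝 0))
    (a : ℝ) (ha : a ∈ Ico (0 : ℝ) 1) (t : ℝ) (ht : 0 ≤ t) (g : ℝ≥0 →ᵇ ℝ) :
    ∀ ε > (0 : ℝ), Tendsto
      (fun N : ℕ => (ℙ : Measure Ω)
        {ω | ε ≤ |(N : ℝ)⁻¹ * (∑ i : Fin N, g (w N i)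
              * (if a ≤ y0 N i then (1 : ℝ) else 0) * (if t < τ N i ω then (1 : ℝ) else 0))
            - ∫ z in a..1, ∫ x, g x * rexp (-(x : ℝ) * t) ∂(μ0 z)|})
      atTop (𝓝 0) :=
  stmt13_general Ω w τ hτmeas hτindep hτdist x0 hx0 y0 hy0 μ0 hμ0 hμ0meas hinit a ha t ht g
end
end

section
/- For every t > 0 and every Borel set A ⊆ [0,∞), the marginal identity ∫_0^1 μ_{y,t}(A) dy = λ(A) holds, where the integral is over y ∈ [0,1) with respect to Lebesgue measure (the single point y = y_C(t) being negligible). -/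
open MeasureTheory Filter Topology Real Set NNReal BoundedContinuousFunction

open scoped ENNReal

noncomputable section

/-!
Split `[0, 1)` at `c = y_C(t)` and substitute on each piece. On `[0, c)` put `y = y_C(s)` with
`s ∈ (0, t]`; the density `y_C'(s) = ∫ w e^{-ws} λ(dw)` cancels the denominator, and Fubini turns
`∫_0^t ∫_A w e^{-ws} λ(dw) ds` into `∫_A (1 - e^{-wt}) λ(dw)`. On `[c, 1)` put `y = y_C(z, t)` with
`z ∈ (0, 1]`; now the density `∫ e^{-wt} μ_{z,0}(dw)` cancels the denominator, and the
disintegration `λ = ∫_0^1 μ_{z,0} dz` turns the result into `∫_A e^{-wt} λ(dw)`. The two pieces add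
up to `λ(A)`.

Neither `ŷ(·, t)` nor the density `z ↦ ∫ e^{-wt} μ_{z,0}(dw)` need be continuous, so each
substitution is done measure-theoretically: a right inverse `h` of a function `G` with
`G r - G p = ∫_p^r ρ` pushes Lebesgue measure on `[G p, G q)` forward to `ρ(s) ds` on `(p, q]`, as
one sees by comparing distribution functions. A vanishing denominator forces its numerator to
vanish as well, so the cancellations hold without any positivity.
-/

section Disintegration

variable {Ω X : Type*} [MeasurableSpace Ω] [MeasurableSpace X] {m : Measure Ω}
  {κ : Ω → Measure X}

theorem aemeasurable_measure_apply_of_aemeasurable_integral [TopologicalSpace X] [BorelSpace X]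
    [HasOuterApproxClosed X] [∀ z, IsFiniteMeasure (κ z)]
    (hκ : ∀ g : X →ᵇ ℝ, AEMeasurable (fun z => ∫ x, g x ∂κ z) m)
    {s : Set X} (hs : MeasurableSet s) : AEMeasurable (fun z => κ z s) m := by
  have hclosed : ∀ F : Set X, IsClosed F → AEMeasurable (fun z => κ z F) m := by
    intro F hF
    have lip : LipschitzWith 1 ((↑) : ℝ≥0 → ℝ) := NNReal.isometry_coe.lipschitz
    have happr : ∀ n, AEMeasurable (fun z => ∫⁻ x, hF.apprSeq n x ∂κ z) m := fun n => by
      refine (ENNReal.measurable_ofReal.comp_aemeasurable (hκ ((hF.apprSeq n).comp _ lip))).congr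
        (ae_of_all _ fun z => ?_)
      simp only [Function.comp_apply, comp_apply, ← toReal_lintegral_coe_eq_integral]
      exact ENNReal.ofReal_toReal (lintegral_lt_top_of_nnreal _ _).ne
    exact aemeasurable_of_tendsto_metrizable_ae' happr
      (ae_of_all _ fun z => HasOuterApproxClosed.tendsto_lintegral_apprSeq hF (κ z))
  induction s, hs using MeasurableSpace.induction_on_inter
    (BorelSpace.measurable_eq.trans (borel_eq_generateFrom_isClosed (α := X)))
    (isPiSystem_isClosed (α := X)) with
  | empty => simp
  | basic F hF => exact hclosed F hF
  | compl t ht iht =>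
    simp_rw [measure_compl ht (measure_ne_top _ _)]
    exact (hclosed univ isClosed_univ).sub iht
  | iUnion f hdisj hf ihf =>
    simp_rw [measure_iUnion hdisj hf]
    exact AEMeasurable.tsum ihf

variable (hκ : ∀ s, MeasurableSet s → AEMeasurable (fun z => κ z s) m)
include hκ

theorem aemeasurable_lintegral_of_measure_apply {f : X → ℝ≥0∞} (hf : Measurable f) :
    AEMeasurable (fun z => ∫⁻ x, f x ∂κ z) m := by
  refine Measurable.ennreal_induction (fun c s hs => ?_) (fun f g _ hf _ ihf ihg => ?_)
    (fun f hf hmono ihf => ?_) hf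
  · simp_rw [lintegral_indicator_const hs]
    exact (hκ s hs).const_mul c
  · simp_rw [Pi.add_apply, lintegral_add_left hf]
    exact ihf.add ihg
  · simp_rw [lintegral_iSup hf hmono]
    exact AEMeasurable.iSup ihf

theorem lintegral_eq_lintegral_lintegral_of_measure_apply {ν : Measure X}
    (hν : ∀ s, MeasurableSet s → ν s = ∫⁻ z, κ z s ∂m) {f : X → ℝ≥0∞} (hf : Measurable f) :
    ∫⁻ x, f x ∂ν = ∫⁻ z, ∫⁻ x, f x ∂κ z ∂m := by
  refine Measurable.ennreal_induction (fun c s hs => ?_) (fun f g _ hf _ ihf ihg => ?_)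
    (fun f hf hmono ihf => ?_) hf
  · simp_rw [lintegral_indicator_const hs, hν s hs]
    rw [lintegral_const_mul'' c (hκ s hs)]
  · simp_rw [Pi.add_apply, lintegral_add_left hf, ihf, ihg]
    rw [lintegral_add_left' (aemeasurable_lintegral_of_measure_apply hκ hf)]
  · simp_rw [lintegral_iSup hf hmono, ihf]
    exact (lintegral_iSup' (fun n => aemeasurable_lintegral_of_measure_apply hκ (hf n))
      (ae_of_all _ fun z n k hnk => lintegral_mono fun x => hmono hnk x)).symm

theorem aemeasurable_integral_of_measure_apply {f : X → ℝ} (hf : Measurable f)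
    (hf0 : 0 ≤ f) : AEMeasurable (fun z => ∫ x, f x ∂κ z) m := by
  simp_rw [integral_eq_lintegral_of_nonneg_ae (ae_of_all _ hf0) hf.aestronglyMeasurable]
  exact (aemeasurable_lintegral_of_measure_apply hκ hf.ennreal_ofReal).ennreal_toReal

theorem integral_eq_integral_integral_of_measure_apply {ν : Measure X}
    (hν : ∀ s, MeasurableSet s → ν s = ∫⁻ z, κ z s ∂m) {f : X → ℝ} (hf : Measurable f)
    (hf0 : 0 ≤ f) (hfi : ∀ z, Integrable f (κ z)) :
    ∫ x, f x ∂ν = ∫ z, ∫ x, f x ∂κ z ∂m := by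
  simp_rw [integral_eq_lintegral_of_nonneg_ae (ae_of_all _ hf0) hf.aestronglyMeasurable]
  rw [integral_toReal (aemeasurable_lintegral_of_measure_apply hκ hf.ennreal_ofReal)
    (ae_of_all _ fun z => (hfi z).lintegral_lt_top),
    lintegral_eq_lintegral_lintegral_of_measure_apply hκ hν hf.ennreal_ofReal]

end Disintegration

theorem integral_mul_exp_neg_mul (a u v : ℝ) :
    ∫ s in u..v, a * rexp (-a * s) = rexp (-a * u) - rexp (-a * v) := by
  have hderiv : ∀ s, HasDerivAt (fun s => -rexp (-a * s)) (a * rexp (-a * s)) s := fun s =>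
    (((hasDerivAt_id s).const_mul (-a)).exp).neg.congr_deriv (by simp only [id, mul_one]; ring)
  rw [intervalIntegral.integral_eq_sub_of_hasDerivAt (fun s _ => hderiv s)
    (Continuous.intervalIntegrable (by fun_prop) u v)]
  ring

section LaplaceTransform

variable {ν : Measure ℝ≥0}

theorem exp_neg_coe_mul_le_one (x : ℝ≥0) {s : ℝ} (hs : 0 ≤ s) : rexp (-(x : ℝ) * s) ≤ 1 :=
  Real.exp_le_one_iff.2 (by nlinarith [x.coe_nonneg])

theorem integrable_exp_neg_coe_mul [IsFiniteMeasure ν] {s : ℝ} (hs : 0 ≤ s) :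
    Integrable (fun x : ℝ≥0 => rexp (-(x : ℝ) * s)) ν :=
  .of_bound (by fun_prop) 1 (ae_of_all _ fun x => by
    rw [Real.norm_of_nonneg (exp_pos _).le]
    exact exp_neg_coe_mul_le_one x hs)

theorem norm_integral_exp_neg_coe_mul_le_one [IsProbabilityMeasure ν] {s : ℝ} (hs : 0 ≤ s) :
    ‖∫ x, rexp (-(x : ℝ) * s) ∂ν‖ ≤ 1 :=
  (norm_integral_le_of_norm_le_const (ae_of_all _ fun x => by
    rw [Real.norm_of_nonneg (exp_pos _).le]
    exact exp_neg_coe_mul_le_one x hs)).trans_eq (by simp)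

theorem measurable_integral_coe_mul_exp_neg_coe_mul [SFinite ν] :
    Measurable fun s => ∫ x, (x : ℝ) * rexp (-(x : ℝ) * s) ∂ν :=
  (by fun_prop : Measurable fun p : ℝ × ℝ≥0 => (p.2 : ℝ) * rexp (-(p.2 : ℝ) * p.1))
    |>.stronglyMeasurable.integral_prod_right'.measurable

variable (hmean : Integrable (fun x : ℝ≥0 => (x : ℝ)) ν)
include hmean

theorem integrable_coe_mul_exp_neg_coe_mul {s : ℝ} (hs : 0 ≤ s) :
    Integrable (fun x : ℝ≥0 => (x : ℝ) * rexp (-(x : ℝ) * s)) ν :=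
  hmean.mono' (by fun_prop) (ae_of_all _ fun x => by
    rw [norm_mul, Real.norm_of_nonneg x.coe_nonneg, Real.norm_of_nonneg (exp_pos _).le]
    exact mul_le_of_le_one_right x.coe_nonneg (exp_neg_coe_mul_le_one x hs))

theorem integrable_prod_coe_mul_exp_neg_coe_mul [SFinite ν] (r : ℝ) :
    Integrable (fun p : ℝ × ℝ≥0 => (p.2 : ℝ) * rexp (-(p.2 : ℝ) * p.1))
      ((volume.restrict (Ioc 0 r)).prod ν) := by
  refine (hmean.comp_snd _).mono' (by fun_prop) ?_
  filter_upwards [Measure.quasiMeasurePreserving_fst.ae (ae_restrict_mem measurableSet_Ioc)]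
    with p hp
  rw [norm_mul, Real.norm_of_nonneg p.2.coe_nonneg, Real.norm_of_nonneg (exp_pos _).le]
  exact mul_le_of_le_one_right p.2.coe_nonneg (exp_neg_coe_mul_le_one p.2 hp.1.le)

theorem integrableOn_integral_coe_mul_exp_neg_coe_mul [SFinite ν] (r : ℝ) :
    IntegrableOn (fun s => ∫ x, (x : ℝ) * rexp (-(x : ℝ) * s) ∂ν) (Ioc 0 r) :=
  (integrable_prod_coe_mul_exp_neg_coe_mul hmean r).integral_prod_left

theorem integral_Ioc_integral_coe_mul_exp_neg_coe_mul [SFinite ν] {r : ℝ} (hr : 0 ≤ r) :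
    ∫ s in Ioc 0 r, ∫ x, (x : ℝ) * rexp (-(x : ℝ) * s) ∂ν
      = ∫ x, (1 - rexp (-(x : ℝ) * r)) ∂ν := by
  rw [integral_integral_swap (integrable_prod_coe_mul_exp_neg_coe_mul hmean r)]
  refine integral_congr_ae (ae_of_all _ fun x => ?_)
  dsimp only
  rw [← intervalIntegral.integral_of_le hr, integral_mul_exp_neg_mul]
  simp

end LaplaceTransform

theorem norm_setIntegral_div_integral_le_one {α : Type*} [MeasurableSpace α] {μ : Measure α}
    {g : α → ℝ} (hg0 : 0 ≤ g) (hg : Integrable g μ) (A : Set α) :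
    ‖(∫ x in A, g x ∂μ) / ∫ x, g x ∂μ‖ ≤ 1 := by
  rw [Real.norm_of_nonneg (div_nonneg (integral_nonneg hg0) (integral_nonneg hg0))]
  exact div_le_one_of_le₀ (setIntegral_le_integral hg (ae_of_all _ hg0)) (integral_nonneg hg0)

theorem integral_mul_setIntegral_div_integral {α : Type*} [MeasurableSpace α] {μ : Measure α}
    {g : α → ℝ} (hg0 : 0 ≤ g) (hg : Integrable g μ) (A : Set α) :
    (∫ x, g x ∂μ) * ((∫ x in A, g x ∂μ) / ∫ x, g x ∂μ) = ∫ x in A, g x ∂μ :=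
  mul_div_cancel_of_imp' fun h =>
    le_antisymm (h ▸ setIntegral_le_integral hg (ae_of_all _ hg0)) (integral_nonneg hg0)

theorem intervalIntegral_ite_lt_eq_add {f g : ℝ → ℝ} {a b c : ℝ} (hac : a ≤ c) (hcb : c ≤ b)
    (hf : IntegrableOn f (Ico a c)) (hg : IntegrableOn g (Ico c b)) :
    ∫ y in a..b, (if y < c then f y else g y) = (∫ y in Ico a c, f y) + ∫ y in Ico c b, g y := by
  have hf' : IntegrableOn (fun y => if y < c then f y else g y) (Ico a c) :=
    hf.congr_fun (fun y hy => (if_pos hy.2).symm) measurableSet_Ico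
  have hg' : IntegrableOn (fun y => if y < c then f y else g y) (Ico c b) :=
    hg.congr_fun (fun y hy => (if_neg (not_lt.2 hy.1)).symm) measurableSet_Ico
  rw [intervalIntegral.integral_of_le (hac.trans hcb), setIntegral_congr_set Ico_ae_eq_Ioc.symm,
    ← Ico_union_Ico_eq_Ico hac hcb,
    setIntegral_union Ico_disjoint_Ico_same measurableSet_Ico hf' hg',
    setIntegral_congr_fun measurableSet_Ico fun y hy => if_pos hy.2,
    setIntegral_congr_fun measurableSet_Ico fun y hy => if_neg (not_lt.2 hy.1)]

section ChangeOfVariables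

variable {ρ G h : ℝ → ℝ} {p q : ℝ}
  (hρ : IntegrableOn ρ (Ioc p q)) (hρ0 : ∀ s ∈ Ioc p q, 0 ≤ ρ s)
  (hG : ∀ r ∈ Icc p q, G r - G p = ∫ s in Ioc p r, ρ s)
include hρ hρ0 hG

theorem monotoneOn_of_sub_eq_setIntegral : MonotoneOn G (Icc p q) := by
  intro u hu v hv huv
  have hρv : IntegrableOn ρ (Ioc p v) := hρ.mono_set (Ioc_subset_Ioc_right hv.2)
  have := setIntegral_mono_set hρv
    (ae_restrict_of_forall_mem measurableSet_Ioc fun s hs => hρ0 s ⟨hs.1, hs.2.trans hv.2⟩)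
    (Ioc_subset_Ioc_right huv).eventuallyLE
  linarith [hG u hu, hG v hv]

variable (hh : ∀ y ∈ Ico (G p) (G q), h y ∈ Icc p q ∧ G (h y) = y)
include hh

theorem monotoneOn_of_rightInverse : MonotoneOn h (Ico (G p) (G q)) := by
  intro y₁ hy₁ y₂ hy₂ hy
  by_contra! hlt
  have := monotoneOn_of_sub_eq_setIntegral hρ hρ0 hG (hh y₂ hy₂).1 (hh y₁ hy₁).1 hlt.le
  rw [(hh y₁ hy₁).2, (hh y₂ hy₂).2] at this
  exact hlt.ne (by rw [le_antisymm hy this])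

theorem aemeasurable_of_rightInverse : AEMeasurable h (volume.restrict (Ico (G p) (G q))) :=
  aemeasurable_restrict_of_monotoneOn measurableSet_Ico
    (monotoneOn_of_rightInverse hρ hρ0 hG hh)

variable (hpq : p ≤ q)
include hpq

theorem volume_preimage_Iic_inter_Ico_of_rightInverse (r : ℝ) :
    volume (h ⁻¹' Iic r ∩ Ico (G p) (G q)) = ENNReal.ofReal (G (max p (min r q)) - G p) := by
  have hGmono := monotoneOn_of_sub_eq_setIntegral hρ hρ0 hG
  set r' := max p (min r q)
  have hr' : r' ∈ Icc p q := ⟨le_max_left _ _, max_le hpq (min_le_right _ _)⟩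
  have hsub : Ico (G p) (G r') ⊆ h ⁻¹' Iic r ∩ Ico (G p) (G q) := by
    intro y hy
    have hyq : y ∈ Ico (G p) (G q) := ⟨hy.1, hy.2.trans_le (hGmono hr' ⟨hpq, le_rfl⟩ hr'.2)⟩
    refine ⟨show h y ≤ r from not_lt.1 fun hlt => ?_, hyq⟩
    have := hGmono hr' (hh y hyq).1 (max_le (hh y hyq).1.1 ((min_le_left _ _).trans hlt.le))
    rw [(hh y hyq).2] at this
    exact (hy.2.trans_le this).false
  have hsup : h ⁻¹' Iic r ∩ Ico (G p) (G q) ⊆ Icc (G p) (G r') := by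
    rintro y ⟨hyr, hy⟩
    have := hGmono (hh y hy).1 hr' ((le_min hyr (hh y hy).1.2).trans (le_max_right _ _))
    rw [(hh y hy).2] at this
    exact ⟨hy.1, this⟩
  exact le_antisymm ((measure_mono hsup).trans_eq Real.volume_Icc)
    ((measure_mono hsub).trans_eq' Real.volume_Ico)

theorem map_restrict_Ico_eq_withDensity :
    (volume.restrict (Ico (G p) (G q))).map h
      = (volume.restrict (Ioc p q)).withDensity fun s => ENNReal.ofReal (ρ s) := by
  refine Measure.ext_of_Iic _ _ fun r => ?_
  have hr' : max p (min r q) ∈ Icc p q := ⟨le_max_left _ _, max_le hpq (min_le_right _ _)⟩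
  have hIic : Iic r ∩ Ioc p q = Ioc p (max p (min r q)) := by
    ext s
    simp only [mem_inter_iff, mem_Iic, mem_Ioc, le_max_iff, le_min_iff]
    grind
  rw [Measure.map_apply_of_aemeasurable (aemeasurable_of_rightInverse hρ hρ0 hG hh)
      measurableSet_Iic, Measure.restrict_apply' measurableSet_Ico,
    volume_preimage_Iic_inter_Ico_of_rightInverse hρ hρ0 hG hh hpq,
    withDensity_apply _ measurableSet_Iic, Measure.restrict_restrict measurableSet_Iic, hIic,
    ← ofReal_integral_eq_lintegral_ofReal (hρ.mono_set (Ioc_subset_Ioc_right hr'.2))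
      (ae_restrict_of_forall_mem measurableSet_Ioc fun s hs => hρ0 s ⟨hs.1, hs.2.trans hr'.2⟩),
    hG _ hr']

variable {f : ℝ → ℝ} (hf : AEStronglyMeasurable f (volume.restrict (Ioc p q)))
include hf

theorem aestronglyMeasurable_map_restrict_Ico :
    AEStronglyMeasurable f ((volume.restrict (Ico (G p) (G q))).map h) := by
  rw [map_restrict_Ico_eq_withDensity hρ hρ0 hG hh hpq]
  exact hf.mono_ac (withDensity_absolutelyContinuous _ _)

theorem aestronglyMeasurable_comp_of_rightInverse :
    AEStronglyMeasurable (fun y => f (h y)) (volume.restrict (Ico (G p) (G q))) :=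
  (aestronglyMeasurable_map_restrict_Ico hρ hρ0 hG hh hpq hf).comp_aemeasurable
    (aemeasurable_of_rightInverse hρ hρ0 hG hh)

theorem integrableOn_comp_of_rightInverse {C : ℝ} (hfC : ∀ s ∈ Icc p q, ‖f s‖ ≤ C) :
    IntegrableOn (fun y => f (h y)) (Ico (G p) (G q)) :=
  Integrable.of_bound (aestronglyMeasurable_comp_of_rightInverse hρ hρ0 hG hh hpq hf) C
    (ae_restrict_of_forall_mem measurableSet_Ico fun y hy => hfC _ (hh y hy).1)

theorem setIntegral_comp_of_rightInverse :
    ∫ y in Ico (G p) (G q), f (h y) = ∫ s in Ioc p q, ρ s * f s := by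
  rw [← integral_map (aemeasurable_of_rightInverse hρ hρ0 hG hh)
      (aestronglyMeasurable_map_restrict_Ico hρ hρ0 hG hh hpq hf),
    map_restrict_Ico_eq_withDensity hρ hρ0 hG hh hpq,
    integral_withDensity_eq_integral_toReal_smul₀ hρ.aemeasurable.ennreal_ofReal
      (ae_of_all _ fun _ => ENNReal.ofReal_lt_top)]
  refine setIntegral_congr_fun measurableSet_Ioc fun s hs => ?_
  rw [ENNReal.toReal_ofReal (hρ0 s hs), smul_eq_mul]

end ChangeOfVariables

section BelowYC

variable {lam : Measure ℝ≥0} {yC : ℝ → ℝ}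
  (hyC : ∀ t : ℝ, yC t = 1 - ∫ x, rexp (-(x : ℝ) * t) ∂lam)
include hyC

theorem yC_le_one (t : ℝ) : yC t ≤ 1 := by
  rw [hyC]
  have : 0 ≤ ∫ x, rexp (-(x : ℝ) * t) ∂lam := integral_nonneg fun x => (exp_pos _).le
  linarith

variable [IsProbabilityMeasure lam]

theorem yC_zero : yC 0 = 0 := by
  simp [hyC]

variable (hmean : Integrable (fun x : ℝ≥0 => (x : ℝ)) lam)
include hmean

theorem yC_sub_yC_zero {r : ℝ} (hr : 0 ≤ r) :
    yC r - yC 0 = ∫ s in Ioc 0 r, ∫ x, (x : ℝ) * rexp (-(x : ℝ) * s) ∂lam := by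
  rw [integral_Ioc_integral_coe_mul_exp_neg_coe_mul hmean hr,
    integral_sub (integrable_const 1) (integrable_exp_neg_coe_mul hr), hyC, hyC]
  simp

theorem monotoneOn_yC {q : ℝ} : MonotoneOn yC (Icc 0 q) :=
  monotoneOn_of_sub_eq_setIntegral (integrableOn_integral_coe_mul_exp_neg_coe_mul hmean q)
    (fun _ _ => integral_nonneg fun _ => by positivity) fun r hr => yC_sub_yC_zero hyC hmean hr.1

variable {t0 : ℝ → ℝ} (ht0 : ∀ y ∈ Ico (0 : ℝ) 1, 0 ≤ t0 y ∧ yC (t0 y) = y) {t : ℝ} (ht : 0 ≤ t)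
include ht0 ht

theorem t0_mem_Icc : ∀ y ∈ Ico (yC 0) (yC t), t0 y ∈ Icc 0 t ∧ yC (t0 y) = y := by
  intro y hy
  rw [yC_zero hyC] at hy
  obtain ⟨ht0y, hyCt0⟩ := ht0 y ⟨hy.1, hy.2.trans_le (yC_le_one hyC t)⟩
  refine ⟨⟨ht0y, not_lt.1 fun hlt => ?_⟩, hyCt0⟩
  have := monotoneOn_yC hyC hmean ⟨ht, hlt.le⟩ ⟨ht0y, le_rfl⟩ hlt.le
  rw [hyCt0] at this
  exact (hy.2.trans_le this).false

variable (A : Set ℝ≥0)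

theorem integrableOn_Ico_zero_yC :
    IntegrableOn (fun y => (∫ x in A, (x : ℝ) * rexp (-(x : ℝ) * t0 y) ∂lam)
      / ∫ x, (x : ℝ) * rexp (-(x : ℝ) * t0 y) ∂lam) (Ico 0 (yC t)) := by
  have := integrableOn_comp_of_rightInverse
    (integrableOn_integral_coe_mul_exp_neg_coe_mul hmean t)
    (fun _ _ => integral_nonneg fun _ => by positivity)
    (fun r hr => yC_sub_yC_zero hyC hmean hr.1) (t0_mem_Icc hyC hmean ht0 ht) ht
    ((measurable_integral_coe_mul_exp_neg_coe_mul (ν := lam.restrict A)).div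
      measurable_integral_coe_mul_exp_neg_coe_mul).aestronglyMeasurable
    fun s hs => norm_setIntegral_div_integral_le_one (fun x => by positivity)
      (integrable_coe_mul_exp_neg_coe_mul hmean hs.1) A
  rwa [yC_zero hyC] at this

theorem setIntegral_Ico_zero_yC :
    ∫ y in Ico 0 (yC t), (∫ x in A, (x : ℝ) * rexp (-(x : ℝ) * t0 y) ∂lam)
      / (∫ x, (x : ℝ) * rexp (-(x : ℝ) * t0 y) ∂lam)
      = ∫ x in A, (1 - rexp (-(x : ℝ) * t)) ∂lam := by
  have := setIntegral_comp_of_rightInverse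
    (integrableOn_integral_coe_mul_exp_neg_coe_mul hmean t)
    (fun _ _ => integral_nonneg fun _ => by positivity)
    (fun r hr => yC_sub_yC_zero hyC hmean hr.1) (t0_mem_Icc hyC hmean ht0 ht) ht
    ((measurable_integral_coe_mul_exp_neg_coe_mul (ν := lam.restrict A)).div
      (measurable_integral_coe_mul_exp_neg_coe_mul (ν := lam))).aestronglyMeasurable
  simp only [Pi.div_apply, yC_zero hyC] at this
  rw [this, ← integral_Ioc_integral_coe_mul_exp_neg_coe_mul (hmean.restrict (s := A)) ht]
  refine setIntegral_congr_fun measurableSet_Ioc fun s hs => ?_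
  exact integral_mul_setIntegral_div_integral (fun x => by positivity)
    (integrable_coe_mul_exp_neg_coe_mul hmean hs.1.le) A

end BelowYC

section AboveYC

variable {μ0 : ℝ → Measure ℝ≥0}
  (hμ0meas : ∀ g : ℝ≥0 →ᵇ ℝ, AEMeasurable (fun z => ∫ x, g x ∂(μ0 z)) volume)
include hμ0meas

theorem aemeasurable_integral_exp_neg_coe_mul {t : ℝ} (ht : 0 ≤ t) :
    AEMeasurable (fun z => ∫ x, rexp (-(x : ℝ) * t) ∂(μ0 z)) volume :=
  hμ0meas (.ofNormedAddCommGroup (fun x : ℝ≥0 => rexp (-(x : ℝ) * t)) (by fun_prop) 1 fun x => by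
    rw [Real.norm_of_nonneg (exp_pos _).le]
    exact exp_neg_coe_mul_le_one x ht)

variable [∀ z, IsProbabilityMeasure (μ0 z)]

theorem aemeasurable_setIntegral_exp_neg_coe_mul (t : ℝ) {B : Set ℝ≥0} (hB : MeasurableSet B) :
    AEMeasurable (fun z => ∫ x in B, rexp (-(x : ℝ) * t) ∂(μ0 z)) volume := by
  simp_rw [← integral_indicator hB]
  exact aemeasurable_integral_of_measure_apply
    (fun s hs => aemeasurable_measure_apply_of_aemeasurable_integral hμ0meas hs)
    ((by fun_prop : Measurable fun x : ℝ≥0 => rexp (-(x : ℝ) * t)).indicator hB)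
    (indicator_nonneg fun x _ => (exp_pos _).le)

variable {t : ℝ} (ht : 0 ≤ t)
include ht

theorem integrableOn_integral_exp_neg_coe_mul {s : Set ℝ} (hs : volume s ≠ ∞) :
    IntegrableOn (fun z => ∫ x, rexp (-(x : ℝ) * t) ∂(μ0 z)) s :=
  Measure.integrableOn_of_bounded hs
    (aemeasurable_integral_exp_neg_coe_mul hμ0meas ht).aestronglyMeasurable
    (ae_of_all _ fun _ => norm_integral_exp_neg_coe_mul_le_one ht)

variable {lam : Measure ℝ≥0}
  (hlam : ∀ s : Set ℝ≥0, MeasurableSet s → lam s = ∫⁻ y in Ico (0 : ℝ) 1, (μ0 y) s)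
include hlam

theorem setIntegral_Ico_setIntegral_exp_neg_coe_mul {B : Set ℝ≥0} (hB : MeasurableSet B) :
    ∫ z in Ico 0 1, ∫ x in B, rexp (-(x : ℝ) * t) ∂(μ0 z) = ∫ x in B, rexp (-(x : ℝ) * t) ∂lam := by
  simp_rw [← integral_indicator hB]
  exact (integral_eq_integral_integral_of_measure_apply
    (fun s hs => (aemeasurable_measure_apply_of_aemeasurable_integral hμ0meas hs).restrict) hlam
    ((by fun_prop : Measurable fun x : ℝ≥0 => rexp (-(x : ℝ) * t)).indicator hB)
    (indicator_nonneg fun x _ => (exp_pos _).le)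
    fun z => (integrable_exp_neg_coe_mul ht).indicator hB).symm

variable {yC : ℝ → ℝ} (hyC : ∀ t : ℝ, yC t = 1 - ∫ x, rexp (-(x : ℝ) * t) ∂lam)
  {yCy : ℝ → ℝ → ℝ}
  (hyCy : ∀ y t : ℝ, yCy y t = 1 - ∫ z in y..1, ∫ x, rexp (-(x : ℝ) * t) ∂(μ0 z))
include hyCy

omit hlam in
theorem yCy_sub_yCy_zero {r : ℝ} (hr : 0 ≤ r) :
    yCy r t - yCy 0 t = ∫ z in Ioc 0 r, ∫ x, rexp (-(x : ℝ) * t) ∂(μ0 z) := by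
  have hint (a b : ℝ) :
      IntervalIntegrable (fun z => ∫ x, rexp (-(x : ℝ) * t) ∂(μ0 z)) volume a b :=
    intervalIntegrable_iff.2 (integrableOn_integral_exp_neg_coe_mul hμ0meas ht measure_Ioc_lt_top.ne)
  rw [hyCy, hyCy, ← intervalIntegral.integral_of_le hr,
    ← intervalIntegral.integral_add_adjacent_intervals (hint 0 r) (hint r 1)]
  ring

include hyC in
theorem yCy_zero : yCy 0 t = yC t := by
  have := setIntegral_Ico_setIntegral_exp_neg_coe_mul hμ0meas ht hlam MeasurableSet.univ
  simp only [Measure.restrict_univ] at this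
  rw [hyCy, hyC, ← this, intervalIntegral.integral_of_le zero_le_one,
    setIntegral_congr_set Ico_ae_eq_Ioc]

variable {yhat : ℝ → ℝ → ℝ}
  (hyhat : ∀ y ∈ Ico (yC t) 1, yhat y t ∈ Ico (0 : ℝ) 1 ∧ yCy (yhat y t) t = y)
include hyC hyhat

theorem yhat_mem_Icc :
    ∀ y ∈ Ico (yCy 0 t) (yCy 1 t), yhat y t ∈ Icc 0 1 ∧ yCy (yhat y t) t = y := by
  rw [yCy_zero hμ0meas ht hlam hyC hyCy, show yCy 1 t = 1 by simp [hyCy]]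
  exact fun y hy => ⟨Ico_subset_Icc_self (hyhat y hy).1, (hyhat y hy).2⟩

variable {A : Set ℝ≥0} (hA : MeasurableSet A)
include hA

theorem integrableOn_Ico_yC_one :
    IntegrableOn (fun y => (∫ x in A, rexp (-(x : ℝ) * t) ∂(μ0 (yhat y t)))
      / ∫ x, rexp (-(x : ℝ) * t) ∂(μ0 (yhat y t))) (Ico (yC t) 1) := by
  have := integrableOn_comp_of_rightInverse (G := fun z => yCy z t)
    (integrableOn_integral_exp_neg_coe_mul hμ0meas ht measure_Ioc_lt_top.ne)
    (fun z _ => integral_nonneg fun x => (exp_pos _).le)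
    (fun r hr => yCy_sub_yCy_zero hμ0meas ht hyCy hr.1)
    (yhat_mem_Icc hμ0meas ht hlam hyC hyCy hyhat) zero_le_one
    ((aemeasurable_setIntegral_exp_neg_coe_mul hμ0meas t hA).div
      (aemeasurable_integral_exp_neg_coe_mul hμ0meas ht)).aestronglyMeasurable.restrict
    fun z _ => norm_setIntegral_div_integral_le_one (fun x => (exp_pos _).le)
      (integrable_exp_neg_coe_mul ht) A
  rwa [yCy_zero hμ0meas ht hlam hyC hyCy, show yCy 1 t = 1 by simp [hyCy]] at this

theorem setIntegral_Ico_yC_one :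
    ∫ y in Ico (yC t) 1, (∫ x in A, rexp (-(x : ℝ) * t) ∂(μ0 (yhat y t)))
      / (∫ x, rexp (-(x : ℝ) * t) ∂(μ0 (yhat y t)))
      = ∫ x in A, rexp (-(x : ℝ) * t) ∂lam := by
  have := setIntegral_comp_of_rightInverse (G := fun z => yCy z t)
    (integrableOn_integral_exp_neg_coe_mul hμ0meas ht measure_Ioc_lt_top.ne)
    (fun z _ => integral_nonneg fun x => (exp_pos _).le)
    (fun r hr => yCy_sub_yCy_zero hμ0meas ht hyCy hr.1)
    (yhat_mem_Icc hμ0meas ht hlam hyC hyCy hyhat) zero_le_one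
    ((aemeasurable_setIntegral_exp_neg_coe_mul hμ0meas t hA).div
      (aemeasurable_integral_exp_neg_coe_mul hμ0meas ht)).aestronglyMeasurable.restrict
  simp only [Pi.div_apply, yCy_zero hμ0meas ht hlam hyC hyCy,
    show yCy 1 t = 1 by simp [hyCy]] at this
  rw [this, ← setIntegral_Ico_setIntegral_exp_neg_coe_mul hμ0meas ht hlam hA,
    setIntegral_congr_set Ico_ae_eq_Ioc]
  exact setIntegral_congr_fun measurableSet_Ioc fun z _ =>
    integral_mul_setIntegral_div_integral (fun x => (exp_pos _).le)
      (integrable_exp_neg_coe_mul ht) A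

end AboveYC

theorem stmt16_general
    (μ0 : ℝ → Measure ℝ≥0) [∀ z, IsProbabilityMeasure (μ0 z)]
    (hμ0meas : ∀ g : ℝ≥0 →ᵇ ℝ, AEMeasurable (fun z => ∫ x, g x ∂(μ0 z)) volume)
    (lam : Measure ℝ≥0) [IsProbabilityMeasure lam]
    (hlam : ∀ s : Set ℝ≥0, MeasurableSet s →
      lam s = ∫⁻ y in Ico (0 : ℝ) 1, (μ0 y) s)
    (hmean : Integrable (fun x : ℝ≥0 => (x : ℝ)) lam)
    (yC : ℝ → ℝ) (hyC : ∀ t : ℝ, yC t = 1 - ∫ x, rexp (-(x : ℝ) * t) ∂lam)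
    (t0 : ℝ → ℝ)
    (ht0 : ∀ y ∈ Ico (0 : ℝ) 1, 0 ≤ t0 y ∧ yC (t0 y) = y)
    (yCy : ℝ → ℝ → ℝ)
    (hyCy : ∀ y t : ℝ, yCy y t = 1 - ∫ z in y..1, ∫ x, rexp (-(x : ℝ) * t) ∂(μ0 z))
    (yhat : ℝ → ℝ → ℝ)
    (hyhat : ∀ t : ℝ, 0 < t → ∀ y ∈ Ico (yC t) 1,
      yhat y t ∈ Ico (0 : ℝ) 1 ∧ yCy (yhat y t) t = y)
    (t : ℝ) (ht : 0 < t) (A : Set ℝ≥0) (hA : MeasurableSet A) :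
    ∫ y in (0 : ℝ)..1,
        (if y < yC t then
          (∫ x in A, (x : ℝ) * rexp (-(x : ℝ) * t0 y) ∂lam)
            / (∫ x, (x : ℝ) * rexp (-(x : ℝ) * t0 y) ∂lam)
        else
          (∫ x in A, rexp (-(x : ℝ) * t) ∂(μ0 (yhat y t)))
            / (∫ x, rexp (-(x : ℝ) * t) ∂(μ0 (yhat y t))))
      = (lam A).toReal := by
  have hyC_nonneg : 0 ≤ yC t :=
    yC_zero hyC ▸ monotoneOn_yC hyC hmean ⟨le_rfl, ht.le⟩ ⟨ht.le, le_rfl⟩ ht.le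
  rw [intervalIntegral_ite_lt_eq_add hyC_nonneg (yC_le_one hyC t)
      (integrableOn_Ico_zero_yC hyC hmean ht0 ht.le A)
      (integrableOn_Ico_yC_one hμ0meas ht.le hlam hyC hyCy (hyhat t ht) hA),
    setIntegral_Ico_zero_yC hyC hmean ht0 ht.le A,
    setIntegral_Ico_yC_one hμ0meas ht.le hlam hyC hyCy (hyhat t ht) hA,
    integral_sub (integrable_const 1).integrableOn (integrable_exp_neg_coe_mul ht.le).integrableOn]
  simp [measureReal_def]

/-- the marginal identity `∫_0^1 μ_{y,t}(A) dy = λ(A)` for every `t > 0`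
and every Borel set `A ⊆ [0,∞)`, where `μ_{y,t}` is given by its densities with respect
to `λ` (for `y < y_C(t)`) and to `μ_{ŷ(y,t),0}` (for `y > y_C(t)`). -/
theorem stmt16
    (μ0 : ℝ → Measure ℝ≥0) [∀ z, IsProbabilityMeasure (μ0 z)]
    (hμ0meas : ∀ g : ℝ≥0 →ᵇ ℝ, AEMeasurable (fun z => ∫ x, g x ∂(μ0 z)) volume)
    (lam : Measure ℝ≥0) [IsProbabilityMeasure lam]
    (hlam : ∀ s : Set ℝ≥0, MeasurableSet s →
      lam s = ∫⁻ y in Ico (0 : ℝ) 1, (μ0 y) s)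
    (h0 : lam {0} = 0)
    (hmean : Integrable (fun x : ℝ≥0 => (x : ℝ)) lam)
    (yC : ℝ → ℝ) (hyC : ∀ t : ℝ, yC t = 1 - ∫ x, rexp (-(x : ℝ) * t) ∂lam)
    (t0 : ℝ → ℝ)
    (ht0 : ∀ y ∈ Ico (0 : ℝ) 1, 0 ≤ t0 y ∧ yC (t0 y) = y)
    (ht0' : ∀ t : ℝ, 0 ≤ t → t0 (yC t) = t)
    (yCy : ℝ → ℝ → ℝ)
    (hyCy : ∀ y t : ℝ, yCy y t = 1 - ∫ z in y..1, ∫ x, rexp (-(x : ℝ) * t) ∂(μ0 z))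
    (yhat : ℝ → ℝ → ℝ)
    (hyhat : ∀ t : ℝ, 0 < t → ∀ y ∈ Ico (yC t) 1,
      yhat y t ∈ Ico (0 : ℝ) 1 ∧ yCy (yhat y t) t = y)
    (t : ℝ) (ht : 0 < t) (A : Set ℝ≥0) (hA : MeasurableSet A) :
    ∫ y in (0 : ℝ)..1,
        (if y < yC t then
          (∫ x in A, (x : ℝ) * rexp (-(x : ℝ) * t0 y) ∂lam)
            / (∫ x, (x : ℝ) * rexp (-(x : ℝ) * t0 y) ∂lam)
        else
          (∫ x in A, rexp (-(x : ℝ) * t) ∂(μ0 (yhat y t)))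
            / (∫ x, rexp (-(x : ℝ) * t) ∂(μ0 (yhat y t))))
      = (lam A).toReal :=
  stmt16_general μ0 hμ0meas lam hlam hmean yC hyC t0 ht0 yCy hyCy yhat hyhat t ht A hA
end
end
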